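/- arXiv:1007.0418 — 5 statements merged into one kernel-verified Lean document; each statement's English description precedes it below -/
import Mathlib

section
/- If K is a clique complex (i.e., every set of vertices that are pairwise joined by edges of K is a simplex of K), σ is a simplex of K, and σ₀, σ₁, …, σ_r is a collection of faces of σ, then the union over i of the intersections ⋂_{v ∈ σ_i} st_K(v) of the closed simplicial stars of the vertices of σ_i is a contractible subcomplex of K. -/
attribute [local instance] Classical.propDecidable

/-- A finite abstract simplicial complex on vertex type `V`:
a downward-closed family of nonempty finite vertex sets. -/
structure ASC (V : Type) where
  faces : Set (Finset V)
  nonempty_of_mem : ∀ s ∈ faces, s.Nonempty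
  down_closed : ∀ s ∈ faces, ∀ t : Finset V, t ⊆ s → t.Nonempty → t ∈ faces

namespace ASC

variable {V : Type}

/-- The geometric realization of `K`, as a subspace of `V → ℝ`. -/
def space [Fintype V] (K : ASC V) : Type :=
  {f : V → ℝ // (∃ s ∈ K.faces, ∀ v, f v ≠ 0 → v ∈ s) ∧ (∀ v, 0 ≤ f v) ∧ ∑ v, f v = 1}

noncomputable instance [Fintype V] (K : ASC V) : TopologicalSpace K.space :=
  instTopologicalSpaceSubtype

/-- `K` is a clique (flag) complex: every nonempty vertex set which pairwise spans
edges of `K` is a face of `K`. -/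
def IsClique (K : ASC V) : Prop :=
  ∀ s : Finset V, s.Nonempty →
    (∀ v ∈ s, ∀ w ∈ s, ({v, w} : Finset V) ∈ K.faces) → s ∈ K.faces

/-- The closed star of a vertex `v`: faces `τ` with `τ ∪ {v}` a face. -/
def star (K : ASC V) (v : V) : ASC V where
  faces := {s | s ∈ K.faces ∧ insert v s ∈ K.faces}
  nonempty_of_mem s hs := K.nonempty_of_mem s hs.1
  down_closed s hs t hts htne :=
    ⟨K.down_closed s hs.1 t hts htne,
     K.down_closed _ hs.2 _ (Finset.insert_subset_insert v hts) (Finset.insert_nonempty _ _)⟩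

/-- The intersection `⋂_{v ∈ σ} st_K(v)` of the stars of the vertices of `σ`. -/
def interStars (K : ASC V) (σ : Finset V) : ASC V where
  faces := {s | s ∈ K.faces ∧ ∀ v ∈ σ, insert v s ∈ K.faces}
  nonempty_of_mem s hs := K.nonempty_of_mem s hs.1
  down_closed s hs t hts htne :=
    ⟨K.down_closed s hs.1 t hts htne, fun v hv =>
      K.down_closed _ (hs.2 v hv) _ (Finset.insert_subset_insert v hts)
        (Finset.insert_nonempty _ _)⟩

/-- The star cluster `SC_K(σ) = ⋃_{v ∈ σ} st_K(v)` of a simplex `σ`. -/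
def starCluster (K : ASC V) (σ : Finset V) : ASC V where
  faces := {s | s ∈ K.faces ∧ ∃ v ∈ σ, insert v s ∈ K.faces}
  nonempty_of_mem s hs := K.nonempty_of_mem s hs.1
  down_closed s hs t hts htne :=
    ⟨K.down_closed s hs.1 t hts htne, by
      obtain ⟨v, hv, hins⟩ := hs.2
      exact ⟨v, hv, K.down_closed _ hins _ (Finset.insert_subset_insert v hts)
        (Finset.insert_nonempty _ _)⟩⟩

/-- Intersection of two simplicial complexes. -/
def inter (K₁ K₂ : ASC V) : ASC V where
  faces := K₁.faces ∩ K₂.faces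
  nonempty_of_mem s hs := K₁.nonempty_of_mem s hs.1
  down_closed s hs t hts htne :=
    ⟨K₁.down_closed s hs.1 t hts htne, K₂.down_closed s hs.2 t hts htne⟩

end ASC

/-- The relation on `X × [0,1]` collapsing `X × {0}` and `X × {1}` to points. -/
def SuspRel (X : Type) [TopologicalSpace X] :
    X × unitInterval → X × unitInterval → Prop := fun a b =>
  (a.2 = 0 ∧ b.2 = 0) ∨ (a.2 = 1 ∧ b.2 = 1)

/-- The unreduced suspension of a topological space. -/
def Susp (X : Type) [TopologicalSpace X] : Type := Quot (SuspRel X)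

noncomputable instance Susp.ts (X : Type) [TopologicalSpace X] : TopologicalSpace (Susp X) :=
  instTopologicalSpaceQuot

/-- The independence complex of a graph: faces are the nonempty independent vertex sets. -/
def SimpleGraph.indepComplex (G : SimpleGraph V) : ASC V where
  faces := {s | s.Nonempty ∧ ∀ v ∈ s, ∀ w ∈ s, ¬ G.Adj v w}
  nonempty_of_mem s hs := hs.1
  down_closed s hs t hts htne := ⟨htne, fun v hv w hw => hs.2 v (hts hv) w (hts hw)⟩

/-- `X` is `n`-connected (`n : ℤ`): nonempty when `n ≥ -1`, and all homotopy
groups `π_k` for `0 ≤ k ≤ n` are trivial (triviality of `π_0` meaning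
path-connectedness). -/
def NConnected (n : ℤ) (X : Type) [TopologicalSpace X] : Prop :=
  (-1 ≤ n → Nonempty X) ∧
    ∀ k : ℕ, (k : ℤ) ≤ n → ∀ x : X, Subsingleton (HomotopyGroup (Fin k) X x)

/-!
Induct on the number of faces `σᵢ`. In a clique complex each `⋂_{v ∈ τ} st(v)` with
`∅ ≠ τ ⊆ σ` is a cone with apex any vertex of `τ`, which settles the case of one face. For the
step, let `A` be the union for `σ₀, …, σᵣ` (contractible by induction) and `B` the star
intersection for `σᵣ₊₁`, a cone with apex `a ∈ σᵣ₊₁`. The full subcomplex of `A` on the vertex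
set `W` of `B` contains `A ∩ B` and, by the clique condition, is again a cone with apex `a`.
Hence the contraction of `|B|` to `a` extends to a homotopy of `|A|` inside `|A|`: first squeeze
out the mass a point carries off `W`, then slide what is left to `a`. Together they deform
`|A ∪ B|` into `|A|`.
-/

open Set AffineMap

theorem ContractibleSpace.of_deformation_into {E : Type*} [TopologicalSpace E] {S T : Set E}
    [ContractibleSpace T] (hTS : T ⊆ S) (Φ : unitInterval × S → E) (hΦ : Continuous Φ)
    (hΦS : ∀ p, Φ p ∈ S) (h0 : ∀ x, Φ (0, x) = x) (h1 : ∀ x, Φ (1, x) ∈ T) :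
    ContractibleSpace S := by
  let r : C(S, T) := ⟨fun x => ⟨Φ (1, x), h1 x⟩, by fun_prop⟩
  let H : (ContinuousMap.id S).Homotopy ((ContinuousMap.inclusion hTS).comp r) :=
    { toFun := fun p => ⟨Φ p, hΦS p⟩
      map_zero_left := fun x => Subtype.ext (h0 x)
      map_one_left := fun _ => rfl }
  rw [contractible_iff_id_nullhomotopic]
  obtain ⟨y, hy⟩ := ((id_nullhomotopic T).comp_left r).comp_right (ContinuousMap.inclusion hTS)
  exact ⟨y, ContinuousMap.Homotopic.trans ⟨H⟩ (by simpa using hy)⟩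

section StdSimplex

variable {ι : Type*} [Fintype ι] {f : ι → ℝ}

theorem support_nonempty_of_mem_stdSimplex (hf : f ∈ stdSimplex ℝ ι) :
    (Function.support f).Nonempty := by
  obtain ⟨v, -, hv⟩ := Finset.exists_ne_zero_of_sum_ne_zero (hf.2.symm ▸ one_ne_zero)
  exact ⟨v, hv⟩

theorem sum_le_one_of_mem_stdSimplex (hf : f ∈ stdSimplex ℝ ι) (s : Finset ι) :
    ∑ v ∈ s, f v ≤ 1 :=
  hf.2 ▸ Finset.sum_le_sum_of_subset_of_nonneg (Finset.subset_univ s) fun v _ _ => hf.1 v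

theorem sum_eq_one_of_support_subset (hf : f ∈ stdSimplex ℝ ι) {s : Finset ι}
    (hs : Function.support f ⊆ s) : ∑ v ∈ s, f v = 1 :=
  hf.2 ▸ Finset.sum_subset (Finset.subset_univ s) fun _ _ hv =>
    Function.notMem_support.mp fun h => hv (hs h)

end StdSimplex

namespace ASC

variable {V : Type}

def iUnion {ι : Type*} (K : ι → ASC V) : ASC V where
  faces := ⋃ i, (K i).faces
  nonempty_of_mem s hs := by
    obtain ⟨i, hi⟩ := mem_iUnion.mp hs
    exact (K i).nonempty_of_mem s hi
  down_closed s hs t hts htne := by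
    obtain ⟨i, hi⟩ := mem_iUnion.mp hs
    exact mem_iUnion.mpr ⟨i, (K i).down_closed s hi t hts htne⟩

def IsCone (K : ASC V) (a : V) : Prop :=
  ∀ s ∈ K.faces, insert a s ∈ K.faces

noncomputable def scaleOff (W : Finset V) (α : ℝ) (f : V → ℝ) : V → ℝ :=
  fun v => if v ∈ W then f v else α * f v

section ScaleOff

variable {W : Finset V} {α : ℝ} {f : V → ℝ}

@[simp] theorem scaleOff_one : scaleOff W 1 f = f := by
  ext v
  simp [scaleOff]

theorem scaleOff_of_support_subset (hf : Function.support f ⊆ W) : scaleOff W α f = f := by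
  ext v
  by_cases hv : v ∈ W
  · simp [scaleOff, hv]
  · simp [scaleOff, hv, Function.notMem_support.mp fun h => hv (hf h)]

theorem support_scaleOff_subset : Function.support (scaleOff W α f) ⊆ Function.support f := by
  intro v hv
  contrapose! hv
  simp [scaleOff, Function.notMem_support.mp hv]

theorem support_scaleOff_zero_subset :
    Function.support (scaleOff W 0 f) ⊆ Function.support f ∩ W := by
  intro v hv
  refine ⟨support_scaleOff_subset hv, Finset.mem_coe.mpr ?_⟩
  by_contra h
  simp [scaleOff, h] at hv

theorem scaleOff_nonneg (hf : ∀ v, 0 ≤ f v) (hα : 0 ≤ α) (v : V) : 0 ≤ scaleOff W α f v := by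
  unfold scaleOff
  split_ifs
  exacts [hf v, mul_nonneg hα (hf v)]

theorem continuous_scaleOff {X : Type*} [TopologicalSpace X] (W : Finset V) {α : X → ℝ}
    {f : X → V → ℝ} (hα : Continuous α) (hf : Continuous f) :
    Continuous fun x => scaleOff W (α x) (f x) := by
  refine continuous_pi fun v => ?_
  unfold scaleOff
  split_ifs
  exacts [(continuous_apply v).comp hf, hα.mul ((continuous_apply v).comp hf)]

end ScaleOff

section Realization

variable [Fintype V]

noncomputable def normalize (g : V → ℝ) : V → ℝ := (∑ v, g v)⁻¹ • g

theorem normalize_of_mem_stdSimplex {f : V → ℝ} (hf : f ∈ stdSimplex ℝ V) :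
    normalize f = f := by
  simp [normalize, hf.2]

theorem normalize_mem_stdSimplex {g : V → ℝ} (hg : ∀ v, 0 ≤ g v) (hpos : 0 < ∑ v, g v) :
    normalize g ∈ stdSimplex ℝ V := by
  refine ⟨fun v => mul_nonneg (inv_nonneg.mpr hpos.le) (hg v), ?_⟩
  simp [normalize, ← Finset.mul_sum, hpos.ne']

theorem support_normalize_subset {g : V → ℝ} :
    Function.support (normalize g) ⊆ Function.support g :=
  Function.support_smul_subset_right _ _

theorem continuous_normalize {X : Type*} [TopologicalSpace X] {g : X → V → ℝ}
    (hg : Continuous g) (hne : ∀ x, ∑ v, g x v ≠ 0) : Continuous fun x => normalize (g x) :=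
  ((continuous_finsetSum _ fun v _ => (continuous_apply v).comp hg).inv₀ hne).smul hg

def carrier (K : ASC V) : Set (V → ℝ) :=
  {f | (∃ s ∈ K.faces, Function.support f ⊆ s) ∧ f ∈ stdSimplex ℝ V}

theorem contractibleSpace_space_iff (K : ASC V) :
    ContractibleSpace K.space ↔ ContractibleSpace K.carrier :=
  Iff.rfl

theorem carrier_mono {K L : ASC V} (h : K.faces ⊆ L.faces) : K.carrier ⊆ L.carrier :=
  fun _ ⟨⟨s, hs, hfs⟩, hf⟩ => ⟨⟨s, h hs, hfs⟩, hf⟩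

theorem carrier_eq_union {X A B : ASC V} (h : X.faces = A.faces ∪ B.faces) :
    X.carrier = A.carrier ∪ B.carrier := by
  ext f
  simp only [carrier, h, mem_union, mem_ofPred_eq]
  grind

theorem carrier_inter (A B : ASC V) : (A.inter B).carrier = A.carrier ∩ B.carrier := by
  refine Subset.antisymm (fun f hf => ⟨carrier_mono (K := A.inter B) inter_subset_left hf,
    carrier_mono (K := A.inter B) inter_subset_right hf⟩) ?_
  rintro f ⟨⟨⟨s, hs, hfs⟩, hf⟩, ⟨s', hs', hfs'⟩, -⟩
  obtain ⟨v, hv⟩ := support_nonempty_of_mem_stdSimplex hf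
  have hsub : s ∩ s' ⊆ s ∧ s ∩ s' ⊆ s' := ⟨Finset.inter_subset_left, Finset.inter_subset_right⟩
  have hne : (s ∩ s').Nonempty := ⟨v, Finset.mem_inter.mpr ⟨hfs hv, hfs' hv⟩⟩
  exact ⟨⟨s ∩ s', ⟨A.down_closed s hs _ hsub.1 hne, B.down_closed s' hs' _ hsub.2 hne⟩,
    fun w hw => Finset.mem_inter.mpr ⟨hfs hw, hfs' hw⟩⟩, hf⟩

theorem isClosed_carrier (K : ASC V) : IsClosed K.carrier := by
  have hface : ∀ s : Finset V, IsClosed {f : V → ℝ | Function.support f ⊆ s} := by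
    intro s
    have : {f : V → ℝ | Function.support f ⊆ s} = ⋂ v ∈ (↑s : Set V)ᶜ, {f | f v = 0} := by
      ext f
      simp only [mem_ofPred_eq, Function.support_subset_iff', mem_iInter, mem_compl_iff,
        Finset.mem_coe]
    rw [this]
    exact isClosed_biInter fun v _ => isClosed_eq (continuous_apply v) continuous_const
  have : K.carrier = (⋃ s ∈ K.faces, {f : V → ℝ | Function.support f ⊆ s}) ∩ stdSimplex ℝ V := by
    ext f
    simp [carrier]
  rw [this]
  exact (K.faces.toFinite.isClosed_biUnion fun s _ => hface s).inter (isClosed_stdSimplex ℝ V)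

theorem lineMap_mem_carrier {K : ASC V} {f g : V → ℝ} {s : Finset V} (hs : s ∈ K.faces)
    (hf : f ∈ stdSimplex ℝ V) (hg : g ∈ stdSimplex ℝ V)
    (hfs : Function.support f ⊆ s) (hgs : Function.support g ⊆ s) {t : ℝ} (ht : t ∈ Icc 0 1) :
    lineMap f g t ∈ K.carrier := by
  refine ⟨⟨s, hs, ?_⟩, (convex_stdSimplex ℝ V).lineMap_mem hf hg ht⟩
  rw [lineMap_apply_module]
  exact (Function.support_add _ _).trans (union_subset
    ((Function.support_smul_subset_right _ _).trans hfs)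
    ((Function.support_smul_subset_right _ _).trans hgs))

theorem single_mem_carrier {K : ASC V} {a : V} (ha : {a} ∈ K.faces) :
    Pi.single a 1 ∈ K.carrier :=
  ⟨⟨{a}, ha, by simp⟩, single_mem_stdSimplex ℝ a⟩

theorem IsCone.lineMap_mem_carrier {K : ASC V} {a : V} (hK : K.IsCone a) {f : V → ℝ}
    (hf : f ∈ K.carrier) {t : ℝ} (ht : t ∈ Icc 0 1) :
    lineMap f (Pi.single a 1) t ∈ K.carrier := by
  obtain ⟨⟨s, hs, hfs⟩, hf⟩ := hf
  refine ASC.lineMap_mem_carrier (hK s hs) hf (single_mem_stdSimplex ℝ a)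
    (hfs.trans (by simp)) (Pi.support_single_subset.trans ?_) ht
  simp

theorem IsCone.contractibleSpace {K : ASC V} {a : V} (hK : K.IsCone a) (ha : {a} ∈ K.faces) :
    ContractibleSpace K.space := by
  rw [contractibleSpace_space_iff]
  refine ContractibleSpace.of_deformation_into (T := {Pi.single a 1})
    (singleton_subset_iff.mpr (single_mem_carrier ha))
    (fun p => lineMap p.2.1 (Pi.single a 1) p.1.1) (by fun_prop)
    (fun p => hK.lineMap_mem_carrier p.2.2 p.1.2) (fun x => by simp) (fun x => by simp)

/-- With `c` the mass of `f` on `W` and `u = 2tc`: while `u ≤ 1` the mass off `W` is scaled by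
`1 - u` (and the point renormalised), from `u = 1` on the point, now supported in `W`, slides to
`a`. The normalising sum never vanishes, as `c = 0` forces `u = 0`. If `f` is supported in `W`
this is the contraction to `a`, run during `t ∈ [1/2, 1]`. -/
noncomputable def collapse (W : Finset V) (a : V) (t : ℝ) (f : V → ℝ) : V → ℝ :=
  lineMap (normalize (scaleOff W (max 0 (1 - 2 * t * ∑ v ∈ W, f v)) f)) (Pi.single a 1)
    (max 0 (2 * t * ∑ v ∈ W, f v - 1))

section Collapse

variable {W : Finset V} {a : V} {t : ℝ} {f : V → ℝ}

theorem sum_scaleOff_collapse_pos (hf : f ∈ stdSimplex ℝ V) :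
    0 < ∑ v, scaleOff W (max 0 (1 - 2 * t * ∑ v ∈ W, f v)) f v := by
  rcases (Finset.sum_nonneg fun v _ => hf.1 v : 0 ≤ ∑ v ∈ W, f v).eq_or_lt with hc | hc
  · simp [← hc, hf.2]
  · refine hc.trans_le ?_
    calc ∑ v ∈ W, f v = ∑ v ∈ W, scaleOff W (max 0 (1 - 2 * t * ∑ v ∈ W, f v)) f v :=
          Finset.sum_congr rfl fun v hv => by simp [scaleOff, hv]
      _ ≤ _ := Finset.sum_le_sum_of_subset_of_nonneg (Finset.subset_univ W) fun v _ _ =>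
          scaleOff_nonneg hf.1 (le_max_left _ _) v

theorem collapse_zero (hf : f ∈ stdSimplex ℝ V) : collapse W a 0 f = f := by
  simp [collapse, normalize_of_mem_stdSimplex hf]

theorem collapse_of_support_subset (hf : f ∈ stdSimplex ℝ V) (hW : Function.support f ⊆ W) :
    collapse W a t f = lineMap f (Pi.single a 1) (max 0 (2 * t - 1)) := by
  simp [collapse, sum_eq_one_of_support_subset hf hW, scaleOff_of_support_subset hW,
    normalize_of_mem_stdSimplex hf]

theorem collapse_mem_carrier {A : ASC V} (hAW : ∀ s ∈ A.faces, s ⊆ W → insert a s ∈ A.faces)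
    (hf : f ∈ A.carrier) (ht : t ∈ Icc 0 1) : collapse W a t f ∈ A.carrier := by
  obtain ⟨⟨s, hs, hfs⟩, hfΔ⟩ := hf
  have hg := normalize_mem_stdSimplex (scaleOff_nonneg hfΔ.1 (le_max_left _ _))
    (sum_scaleOff_collapse_pos (W := W) (t := t) hfΔ)
  have hgs := support_normalize_subset.trans (support_scaleOff_subset (W := W) (f := f)
    (α := max 0 (1 - 2 * t * ∑ v ∈ W, f v)))
  have hc0 : 0 ≤ ∑ v ∈ W, f v := Finset.sum_nonneg fun v _ => hfΔ.1 v
  have hc1 := sum_le_one_of_mem_stdSimplex hfΔ W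
  rw [collapse]
  set c := ∑ v ∈ W, f v
  by_cases hu : 2 * t * c ≤ 1
  · rw [max_eq_left (a := 0) (b := 2 * t * c - 1) (by linarith), lineMap_apply_zero]
    exact ⟨⟨s, hs, hgs.trans hfs⟩, hg⟩
  · rw [max_eq_left (a := 0) (b := 1 - 2 * t * c) (by linarith)] at hg ⊢
    have hgW := support_normalize_subset.trans (support_scaleOff_zero_subset (W := W) (f := f))
    have hne : (s ∩ W).Nonempty := by
      obtain ⟨v, hv⟩ := support_nonempty_of_mem_stdSimplex hg
      exact ⟨v, Finset.mem_inter.mpr ⟨hfs (hgW hv).1, (hgW hv).2⟩⟩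
    have hsW := hAW _ (A.down_closed s hs _ Finset.inter_subset_left hne) Finset.inter_subset_right
    refine lineMap_mem_carrier hsW hg (single_mem_stdSimplex ℝ a) ?_ ?_ ⟨le_max_left _ _, ?_⟩
    · intro v hv
      simpa using Or.inr ⟨hfs (hgW hv).1, (hgW hv).2⟩
    · simp
    · exact max_le zero_le_one (by nlinarith [ht.1, ht.2])

theorem continuous_collapse {X : Type*} [TopologicalSpace X] {t : X → ℝ} {f : X → V → ℝ}
    (ht : Continuous t) (hf : Continuous f) (hfΔ : ∀ x, f x ∈ stdSimplex ℝ V) :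
    Continuous fun x => collapse W a (t x) (f x) := by
  have hc : Continuous fun x => ∑ v ∈ W, f x v :=
    continuous_finsetSum _ fun v _ => (continuous_apply v).comp hf
  exact (continuous_normalize (continuous_scaleOff W (by fun_prop) hf)
    fun x => (sum_scaleOff_collapse_pos (hfΔ x)).ne').lineMap continuous_const (by fun_prop)

theorem collapse_of_mem_carrier_inter {A B : ASC V} (hABW : ∀ s ∈ A.faces ∩ B.faces, s ⊆ W)
    (hfA : f ∈ A.carrier) (hfB : f ∈ B.carrier) :
    collapse W a t f = lineMap f (Pi.single a 1) (max 0 (2 * t - 1)) := by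
  obtain ⟨⟨s, hs, hfs⟩, hfΔ⟩ := (carrier_inter A B).symm.subset ⟨hfA, hfB⟩
  exact collapse_of_support_subset hfΔ (hfs.trans (Finset.coe_subset.mpr (hABW s hs)))

end Collapse

theorem contractibleSpace_of_faces_eq_union {X A B : ASC V} [hA : ContractibleSpace A.space]
    {a : V} (W : Finset V) (hX : X.faces = A.faces ∪ B.faces) (hB : B.IsCone a)
    (ha : {a} ∈ A.faces) (hABW : ∀ s ∈ A.faces ∩ B.faces, s ⊆ W)
    (hAW : ∀ s ∈ A.faces, s ⊆ W → insert a s ∈ A.faces) :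
    ContractibleSpace X.space := by
  rw [contractibleSpace_space_iff] at hA ⊢
  have hXAB := carrier_eq_union hX
  have hAX : A.carrier ⊆ X.carrier := hXAB ▸ subset_union_left
  have hBX : B.carrier ⊆ X.carrier := hXAB ▸ subset_union_right
  have hmemB : ∀ f ∈ X.carrier, f ∉ A.carrier → f ∈ B.carrier := fun f hf hfA =>
    (hXAB ▸ hf : f ∈ A.carrier ∪ B.carrier).resolve_left hfA
  have hslide : ∀ {f t}, f ∈ B.carrier → t ∈ Icc (0 : ℝ) 1 →
      lineMap f (Pi.single a 1) (max 0 (2 * t - 1)) ∈ B.carrier := fun hf ht =>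
    hB.lineMap_mem_carrier hf ⟨le_max_left _ _, max_le zero_le_one (by linarith [ht.2])⟩
  let S : Set (unitInterval × X.carrier) := {p | (p.2 : V → ℝ) ∈ A.carrier}
  have hS : IsClosed S := (isClosed_carrier A).preimage (by fun_prop)
  refine ContractibleSpace.of_deformation_into hAX
    (fun p => if (p.2 : V → ℝ) ∈ A.carrier then collapse W a p.1 p.2
      else lineMap (p.2 : V → ℝ) (Pi.single a 1) (max 0 (2 * (p.1 : ℝ) - 1)))
    (Continuous.if ?_ (continuous_collapse (by fun_prop) (by fun_prop) fun p => p.2.2.2)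
      (by fun_prop)) (fun p => ?_) (fun x => ?_) (fun x => ?_)
  · intro p hp
    rw [frontier_eq_closure_inter_closure] at hp
    have hpA : (p.2 : V → ℝ) ∈ A.carrier := (hS.closure_eq ▸ hp.1 : p ∈ S)
    have hpB : (p.2 : V → ℝ) ∈ B.carrier :=
      closure_minimal (s := Sᶜ) (fun q hq => hmemB _ q.2.2 hq)
        ((isClosed_carrier B).preimage (by fun_prop)) hp.2
    exact collapse_of_mem_carrier_inter hABW hpA hpB
  · split_ifs with hpA
    exacts [hAX (collapse_mem_carrier hAW hpA p.1.2), hBX (hslide (hmemB _ p.2.2 hpA) p.1.2)]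
  · split_ifs
    · exact collapse_zero x.2.2
    · simp
  · split_ifs with hxA
    · exact collapse_mem_carrier hAW hxA ⟨zero_le_one, le_rfl⟩
    · norm_num [single_mem_carrier ha]

end Realization

variable {K : ASC V}

theorem IsClique.mem_of_forall_pair (hK : K.IsClique) {s : Finset V} (hs : s.Nonempty)
    (h : ∀ v ∈ s, ∀ w ∈ s, ∃ u ∈ K.faces, v ∈ u ∧ w ∈ u) : s ∈ K.faces :=
  hK s hs fun v hv w hw => by
    obtain ⟨u, hu, hvu, hwu⟩ := h v hv w hw
    exact K.down_closed u hu _ (Finset.insert_subset hvu (Finset.singleton_subset_iff.mpr hwu))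
      (Finset.insert_nonempty _ _)

theorem IsClique.union_mem_of_mem_interStars (hK : K.IsClique) {s τ : Finset V}
    (hτ : τ ∈ K.faces) (hs : s ∈ (K.interStars τ).faces) : s ∪ τ ∈ K.faces := by
  refine hK.mem_of_forall_pair ((K.nonempty_of_mem s hs.1).mono Finset.subset_union_left) ?_
  simp only [Finset.mem_union]
  rintro v (hv | hv) w (hw | hw)
  · exact ⟨s, hs.1, hv, hw⟩
  · exact ⟨insert w s, hs.2 w hw, Finset.mem_insert_of_mem hv, Finset.mem_insert_self _ _⟩
  · exact ⟨insert v s, hs.2 v hv, Finset.mem_insert_self _ _, Finset.mem_insert_of_mem hw⟩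
  · exact ⟨τ, hτ, hv, hw⟩

theorem IsClique.interStars_isCone (hK : K.IsClique) {τ : Finset V} {a : V} (hτ : τ ∈ K.faces)
    (ha : a ∈ τ) : (K.interStars τ).IsCone a := by
  intro s hs
  have hsτ := hK.union_mem_of_mem_interStars hτ hs
  have hsub : insert a s ⊆ s ∪ τ :=
    Finset.insert_subset (Finset.mem_union_right _ ha) Finset.subset_union_left
  exact ⟨K.down_closed _ hsτ _ hsub (Finset.insert_nonempty _ _), fun v hv =>
    K.down_closed _ hsτ _ (Finset.insert_subset (Finset.mem_union_right _ hv) hsub)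
      (Finset.insert_nonempty _ _)⟩

theorem IsClique.mem_interStars_of_forall_singleton_mem (hK : K.IsClique) {s τ : Finset V}
    (hs : s ∈ K.faces) (h : ∀ x ∈ s, {x} ∈ (K.interStars τ).faces) :
    s ∈ (K.interStars τ).faces := by
  obtain ⟨x₀, hx₀⟩ := K.nonempty_of_mem s hs
  refine ⟨hs, fun v hv => hK.mem_of_forall_pair (Finset.insert_nonempty _ _) ?_⟩
  have hedge : ∀ x ∈ s, ∃ u ∈ K.faces, v ∈ u ∧ x ∈ u := fun x hx =>
    ⟨insert v {x}, (h x hx).2 v hv, by simp, by simp⟩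
  simp only [Finset.mem_insert]
  rintro p (rfl | hp) q (rfl | hq)
  · obtain ⟨u, hu, hpu, -⟩ := hedge x₀ hx₀
    exact ⟨u, hu, hpu, hpu⟩
  · exact hedge q hq
  · obtain ⟨u, hu, hqu, hpu⟩ := hedge p hp
    exact ⟨u, hu, hpu, hqu⟩
  · exact ⟨s, hs, hp, hq⟩

theorem interStars_union_faces (K : ASC V) (τ τ' : Finset V) :
    (K.interStars (τ ∪ τ')).faces = (K.interStars τ).faces ∩ (K.interStars τ').faces := by
  ext s
  simp only [interStars, mem_ofPred_eq, mem_inter_iff, Finset.mem_union]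
  grind

theorem singleton_mem_interStars {σ τ : Finset V} {a : V} (hσ : σ ∈ K.faces) (hτσ : τ ⊆ σ)
    (ha : a ∈ σ) : {a} ∈ (K.interStars τ).faces :=
  (K.interStars τ).down_closed σ ⟨hσ, fun v hv => by rwa [Finset.insert_eq_of_mem (hτσ hv)]⟩
    _ (Finset.singleton_subset_iff.mpr ha) (Finset.singleton_nonempty a)

theorem IsClique.insert_mem_interStars (hK : K.IsClique) {s τ τ' : Finset V} {a : V}
    (hττ' : τ ∪ τ' ∈ K.faces) (ha : a ∈ τ') (hs : s ∈ (K.interStars τ).faces)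
    (hs' : s ∈ (K.interStars τ').faces) : insert a s ∈ (K.interStars τ).faces := by
  have hcone := hK.interStars_isCone hττ' (Finset.mem_union_right _ ha) s
    ((interStars_union_faces K τ τ').symm ▸ ⟨hs, hs'⟩)
  rw [interStars_union_faces] at hcone
  exact hcone.1

theorem IsClique.contractibleSpace_iUnion_interStars [Fintype V] (hK : K.IsClique)
    {σ : Finset V} (hσ : σ ∈ K.faces) {n : ℕ} (τ : Fin (n + 1) → Finset V)
    (hne : ∀ i, (τ i).Nonempty) (hsub : ∀ i, τ i ⊆ σ) :
    ContractibleSpace (iUnion fun i => K.interStars (τ i)).space := by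
  have hτK : ∀ {ρ : Finset V}, ρ.Nonempty → ρ ⊆ σ → ρ ∈ K.faces := fun hρ hρσ =>
    K.down_closed σ hσ _ hρσ hρ
  induction n with
  | zero =>
    obtain ⟨a, ha⟩ := hne 0
    refine IsCone.contractibleSpace (a := a) (fun s hs => ?_)
      (mem_iUnion.mpr ⟨0, singleton_mem_interStars hσ (hsub 0) (hsub 0 ha)⟩)
    obtain ⟨i, hi⟩ := mem_iUnion.mp hs
    obtain rfl : i = 0 := Fin.fin_one_eq_zero i
    exact mem_iUnion.mpr ⟨0, hK.interStars_isCone (hτK (hne 0) (hsub 0)) ha s hi⟩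
  | succ n ih =>
    obtain ⟨a, ha⟩ := hne (Fin.last _)
    have := ih (fun i => τ i.castSucc) (fun i => hne _) (fun i => hsub _)
    let B := K.interStars (τ (Fin.last _))
    refine contractibleSpace_of_faces_eq_union
      (A := iUnion fun i : Fin (n + 1) => K.interStars (τ i.castSucc)) (B := B) (a := a)
      (Finset.univ.filter fun x => {x} ∈ B.faces) ?_
      (hK.interStars_isCone (hτK (hne _) (hsub _)) ha)
      (mem_iUnion.mpr ⟨0, singleton_mem_interStars hσ (hsub _) (hsub _ ha)⟩) ?_ ?_
    · ext s
      simp [iUnion, Fin.exists_fin_succ', B]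
    · rintro s ⟨-, hsB⟩ x hx
      simpa using B.down_closed s hsB {x} (by simpa using hx) (Finset.singleton_nonempty x)
    · intro s hsA hsW
      obtain ⟨j, hj⟩ := mem_iUnion.mp hsA
      have hsB : s ∈ B.faces := hK.mem_interStars_of_forall_singleton_mem hj.1 fun x hx => by
        simpa using hsW hx
      exact mem_iUnion.mpr ⟨j, hK.insert_mem_interStars (hτK ((hne _).mono
        Finset.subset_union_left) (Finset.union_subset (hsub _) (hsub _))) ha hj hsB⟩

end ASC

/-- In a clique complex `K`, for faces `σ₀,…,σ_r` of a simplex `σ`,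
the union `⋃ᵢ ⋂_{v ∈ σᵢ} st_K(v)` is a contractible subcomplex of `K`. -/
theorem statement0 {V : Type} [Fintype V] (K : ASC V) (hK : K.IsClique)
    (σ : Finset V) (hσ : σ ∈ K.faces) (r : ℕ) (σs : Fin (r + 1) → Finset V)
    (hface : ∀ i, σs i ∈ K.faces) (hsub : ∀ i, σs i ⊆ σ) :
    (⋃ i, (K.interStars (σs i)).faces) ⊆ K.faces ∧
    ContractibleSpace (ASC.space
      { faces := ⋃ i, (K.interStars (σs i)).faces
        nonempty_of_mem := fun s hs => by
          obtain ⟨i, hi⟩ := Set.mem_iUnion.mp hs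
          exact (K.interStars (σs i)).nonempty_of_mem s hi
        down_closed := fun s hs t hts htne => by
          obtain ⟨i, hi⟩ := Set.mem_iUnion.mp hs
          exact Set.mem_iUnion.mpr
            ⟨i, (K.interStars (σs i)).down_closed s hi t hts htne⟩ }) :=
  ⟨iUnion_subset fun _ _ hs => hs.1, hK.contractibleSpace_iUnion_interStars hσ σs
    (fun i => K.nonempty_of_mem _ (hface i)) hsub⟩
end

section
/- The star cluster SC_K(σ) = ⋃_{v ∈ σ} st_K(v) of any simplex σ in a clique simplicial complex K is contractible. -/
attribute [local instance] Classical.propDecidable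

/-!
Induction on `σ`. The star of a single vertex `a` is a cone with apex `a`, hence star-convex in
the realization. For `σ = insert a σ'`, the star cluster `SC(σ')` is a deformation retract of
`SC(σ)`. Let `θ(x)` be the least mass that `x` puts on the non-neighbours of a vertex `j ∈ σ'`:
it vanishes on `SC(σ')`, and `θ(x) > 0` forces `x ∈ st(a)`. The homotopy moves the mass
`x_w θ(x) / d_w(x)` from each vertex `w` onto `a`, where `d_w(x) ≥ max(θ(x), x_w)` is the least
mass on `{w} ∪` (non-neighbours of `j`) over `j ∈ σ'`. Throughout, the support stays inside
`supp x ∪ {a}`, a face of `st(a)`; at time `1` every non-neighbour of a minimizing `j` has been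
emptied, so by the clique property the point lies in `st(j) ⊆ SC(σ')`.
-/

open Finset ContinuousMap

theorem ContinuousOn.mul_div_of_le {X : Type*} [TopologicalSpace X] {s : Set X}
    {f g h : X → ℝ} (hf : ContinuousOn f s) (hg : ContinuousOn g s) (hh : ContinuousOn h s)
    (hf0 : ∀ x ∈ s, 0 ≤ f x) (hfh : ∀ x ∈ s, f x ≤ h x) (hgh : ∀ x ∈ s, |g x| ≤ h x) :
    ContinuousOn (fun x => f x * g x / h x) s := by
  intro x hx
  rcases eq_or_ne (h x) 0 with hx0 | hx0
  · have hgx : g x = 0 := abs_nonpos_iff.1 (hx0 ▸ hgh x hx)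
    have hbound : ∀ y ∈ s, ‖f y * g y / h y‖ ≤ |g y| := fun y hy => by
      have hh0 : 0 ≤ h y := (hf0 y hy).trans (hfh y hy)
      rw [Real.norm_eq_abs, abs_div, abs_mul, abs_of_nonneg (hf0 y hy), abs_of_nonneg hh0]
      exact div_le_of_le_mul₀ hh0 (abs_nonneg _)
        (by nlinarith [hfh y hy, abs_nonneg (g y)])
    have hlim : Filter.Tendsto (fun y => |g y|) (nhdsWithin x s) (nhds 0) := by
      simpa [ContinuousWithinAt, hgx] using (hg x hx).abs
    simpa [ContinuousWithinAt, hx0] using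
      squeeze_zero_norm' (eventually_nhdsWithin_of_forall hbound) hlim
  · exact ((hf x hx).mul (hg x hx)).div (hh x hx) hx0

namespace ASC

variable {V : Type}

section Faces

variable {K : ASC V}

theorem pair_mem_faces {s : Finset V} (hs : s ∈ K.faces) {u w : V} (hu : u ∈ s) (hw : w ∈ s) :
    ({u, w} : Finset V) ∈ K.faces :=
  K.down_closed s hs _ (insert_subset hu (singleton_subset_iff.2 hw)) (insert_nonempty _ _)

theorem IsClique.insert_mem (hK : K.IsClique) {s : Finset V} (hs : s ∈ K.faces) {v : V}
    (hv : ∀ w ∈ s, ({v, w} : Finset V) ∈ K.faces) : insert v s ∈ K.faces := by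
  obtain ⟨w₀, hw₀⟩ := K.nonempty_of_mem s hs
  refine hK _ (insert_nonempty _ _) fun u hu w hw => ?_
  rcases mem_insert.1 hu with rfl | hus <;> rcases mem_insert.1 hw with rfl | hws
  · rw [pair_eq_singleton]
    exact K.down_closed _ (hv w₀ hw₀) _ (by simp) (singleton_nonempty _)
  · exact hv w hws
  · rw [pair_comm]; exact hv u hus
  · exact pair_mem_faces hs hus hws

theorem support_mem_faces [Fintype V] (x : K.space) :
    (Function.support x.1).toFinset ∈ K.faces := by
  obtain ⟨⟨s, hs, hsub⟩, -, hsum⟩ := x.2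
  obtain ⟨w, -, hw⟩ := exists_ne_zero_of_sum_ne_zero (hsum.trans_ne one_ne_zero)
  exact K.down_closed s hs _ (fun v hv => hsub v (by simpa using hv)) ⟨w, by simpa using hw⟩

theorem starCluster_faces_mono {σ τ : Finset V} (h : σ ⊆ τ) :
    (K.starCluster σ).faces ⊆ (K.starCluster τ).faces :=
  fun _ ⟨hs, v, hv, hvs⟩ => ⟨hs, v, h hv, hvs⟩

def inclusion [Fintype V] {L M : ASC V} (h : L.faces ⊆ M.faces) : C(L.space, M.space) where
  toFun x := ⟨x.1, (x.2.1.imp fun _ hs => ⟨h hs.1, hs.2⟩), x.2.2⟩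
  continuous_toFun := continuous_subtype_val.subtype_mk _

end Faces

section Retraction

variable [Fintype V] (K : ASC V) {σ' : Finset V} (hne : σ'.Nonempty)

noncomputable def nonNbrs (j : V) : Finset V := univ.filter fun w => ({j, w} : Finset V) ∉ K.faces

noncomputable def farMass (x : V → ℝ) : ℝ :=
  σ'.inf' hne fun j => ∑ u ∈ K.nonNbrs j, x u

noncomputable def farMassWith (w : V) (x : V → ℝ) : ℝ :=
  σ'.inf' hne fun j => ∑ u ∈ insert w (K.nonNbrs j), x u

noncomputable def shed (x : V → ℝ) (w : V) : ℝ :=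
  x w * K.farMass hne x / K.farMassWith hne w x

noncomputable def pushToward (a : V) (t : ℝ) (x : V → ℝ) : V → ℝ :=
  x - t • K.shed hne x + (t * ∑ w, K.shed hne x w) • Pi.single a 1

variable {K hne} {x : V → ℝ}

theorem farMass_nonneg (hx : ∀ v, 0 ≤ x v) : 0 ≤ K.farMass hne x :=
  le_inf' hne _ fun _ _ => sum_nonneg fun u _ => hx u

theorem farMass_le_farMassWith (hx : ∀ v, 0 ≤ x v) (w : V) :
    K.farMass hne x ≤ K.farMassWith hne w x :=
  le_inf' hne _ fun _ hj =>
    (inf'_le _ hj).trans (sum_le_sum_of_subset_of_nonneg (subset_insert _ _) fun u _ _ => hx u)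

theorem le_farMassWith (hx : ∀ v, 0 ≤ x v) (w : V) : x w ≤ K.farMassWith hne w x :=
  le_inf' hne _ fun _ _ => single_le_sum (fun u _ => hx u) (mem_insert_self _ _)

theorem shed_nonneg (hx : ∀ v, 0 ≤ x v) (w : V) : 0 ≤ K.shed hne x w :=
  div_nonneg (mul_nonneg (hx w) (farMass_nonneg hx))
    ((farMass_nonneg hx).trans (farMass_le_farMassWith hx w))

theorem shed_le (hx : ∀ v, 0 ≤ x v) (w : V) : K.shed hne x w ≤ x w :=
  div_le_of_le_mul₀ ((farMass_nonneg hx).trans (farMass_le_farMassWith hx w)) (hx w)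
    (mul_le_mul_of_nonneg_left (farMass_le_farMassWith hx w) (hx w))

theorem shed_eq_zero_of_farMass_eq_zero (h : K.farMass hne x = 0) : K.shed hne x = 0 := by
  funext w
  simp [shed, h]

theorem shed_eq_zero_of_apply_eq_zero {w : V} (h : x w = 0) : K.shed hne x w = 0 := by
  simp [shed, h]

theorem shed_eq_self_of_mem_nonNbrs (hx : ∀ v, 0 ≤ x v) {j w : V} (hj : j ∈ σ')
    (hmin : K.farMass hne x = ∑ u ∈ K.nonNbrs j, x u) (hw : w ∈ K.nonNbrs j) :
    K.shed hne x w = x w := by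
  rcases eq_or_ne (K.farMass hne x) 0 with h0 | h0
  · have hxw : x w = 0 :=
      le_antisymm (h0 ▸ hmin ▸ single_le_sum (fun u _ => hx u) hw) (hx w)
    rw [shed_eq_zero_of_apply_eq_zero hxw, hxw]
  · -- `w` being a non-neighbour of the minimizer `j` makes `d_w(x) = θ(x)`.
    have hd : K.farMassWith hne w x = K.farMass hne x :=
      le_antisymm (inf'_le_of_le _ hj (by rw [insert_eq_of_mem hw, hmin]))
        (farMass_le_farMassWith hx w)
    rw [shed, hd, mul_div_assoc, div_self h0, mul_one]

theorem farMass_eq_zero_of_mem_star (hx : ∀ v, 0 ≤ x v) {v : V} (hv : v ∈ σ') {s : Finset V}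
    (hvs : insert v s ∈ K.faces) (hxs : ∀ w, x w ≠ 0 → w ∈ s) : K.farMass hne x = 0 := by
  refine le_antisymm (inf'_le_of_le _ hv (sum_eq_zero fun u hu => ?_).le) (farMass_nonneg hx)
  by_contra hxu
  exact (mem_filter.1 hu).2
    (pair_mem_faces hvs (mem_insert_self _ _) (mem_insert_of_mem (hxs u hxu)))

variable {a : V} {t : ℝ}

theorem pushToward_apply (w : V) :
    K.pushToward hne a t x w =
      x w - t * K.shed hne x w + if w = a then t * ∑ u, K.shed hne x u else 0 := by
  by_cases hw : w = a <;> simp [pushToward, hw]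

theorem pushToward_zero_left : K.pushToward hne a 0 x = x := by
  simp [pushToward]

theorem pushToward_of_farMass_eq_zero (h : K.farMass hne x = 0) :
    K.pushToward hne a t x = x := by
  simp [pushToward, shed_eq_zero_of_farMass_eq_zero h]

theorem pushToward_mem_stdSimplex (hx : x ∈ stdSimplex ℝ V) (ht : t ∈ Set.Icc (0 : ℝ) 1) :
    K.pushToward hne a t x ∈ stdSimplex ℝ V := by
  refine ⟨fun w => ?_, ?_⟩
  · have hshed : t * K.shed hne x w ≤ x w :=
      (mul_le_of_le_one_left (shed_nonneg hx.1 w) ht.2).trans (shed_le hx.1 w)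
    have hmass : 0 ≤ t * ∑ u, K.shed hne x u :=
      mul_nonneg ht.1 (sum_nonneg fun u _ => shed_nonneg hx.1 u)
    rw [pushToward_apply]
    split_ifs <;> linarith
  · simp [pushToward, sum_add_distrib, sum_sub_distrib, ← mul_sum, hx.2]

theorem apply_ne_zero_of_pushToward_ne_zero {w : V} (h : K.pushToward hne a t x w ≠ 0) :
    x w ≠ 0 ∨ w = a := by
  refine or_iff_not_imp_left.2 fun hxw => by_contra fun hwa => h ?_
  rw [not_not] at hxw
  simp [pushToward_apply, hwa, hxw, shed_eq_zero_of_apply_eq_zero hxw]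

theorem pushToward_one_apply_of_ne {w : V} (hwa : w ≠ a) :
    K.pushToward hne a 1 x w = x w - K.shed hne x w := by
  simp [pushToward_apply, hwa]

theorem pushToward_mem_starCluster (x : (K.starCluster (insert a σ')).space)
    (ht : t ∈ Set.Icc (0 : ℝ) 1) :
    (∃ s ∈ (K.starCluster (insert a σ')).faces, ∀ w, K.pushToward hne a t x.1 w ≠ 0 → w ∈ s) ∧
      K.pushToward hne a t x.1 ∈ stdSimplex ℝ V := by
  obtain ⟨⟨s, ⟨hs, v, hv, hvs⟩, hxs⟩, hx⟩ := x.2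
  refine ⟨?_, pushToward_mem_stdSimplex hx ht⟩
  by_cases hθ : K.farMass hne x.1 = 0
  · rw [pushToward_of_farMass_eq_zero hθ]
    exact ⟨s, ⟨hs, v, hv, hvs⟩, hxs⟩
  -- A point away from `SC(σ')` lies in the star of `a`, which absorbs the shed mass.
  obtain rfl : v = a := (mem_insert.1 hv).resolve_right fun hv' =>
    hθ (farMass_eq_zero_of_mem_star hx.1 hv' hvs hxs)
  refine ⟨insert v s, ⟨hvs, v, hv, by rwa [insert_idem]⟩, fun w hw => ?_⟩
  rcases apply_ne_zero_of_pushToward_ne_zero hw with hxw | rfl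
  · exact mem_insert_of_mem (hxs w hxw)
  · exact mem_insert_self _ _

theorem pushToward_one_mem_starCluster (hK : K.IsClique) (hσ : insert a σ' ∈ K.faces)
    (x : (K.starCluster (insert a σ')).space) :
    (∃ s ∈ (K.starCluster σ').faces, ∀ w, K.pushToward hne a 1 x.1 w ≠ 0 → w ∈ s) ∧
      K.pushToward hne a 1 x.1 ∈ stdSimplex ℝ V := by
  have hx : ∀ v, 0 ≤ x.1 v := x.2.2.1
  let y : (K.starCluster (insert a σ')).space :=
    ⟨K.pushToward hne a 1 x.1, pushToward_mem_starCluster x ⟨zero_le_one, le_rfl⟩⟩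
  obtain ⟨j, hj, hmin⟩ := exists_mem_eq_inf' hne fun j => ∑ u ∈ K.nonNbrs j, x.1 u
  have hS : (Function.support y.1).toFinset ∈ K.faces := (support_mem_faces y).1
  have hadj : ∀ w ∈ (Function.support y.1).toFinset, ({j, w} : Finset V) ∈ K.faces := by
    intro w hw
    by_contra hjw
    by_cases hwa : w = a
    · exact hjw (hwa ▸ pair_mem_faces hσ (mem_insert_of_mem hj) (mem_insert_self _ _))
    · have hy : K.pushToward hne a 1 x.1 w = 0 := by
        rw [pushToward_one_apply_of_ne hwa,
          shed_eq_self_of_mem_nonNbrs hx hj hmin (by simpa [nonNbrs] using hjw), sub_self]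
      exact (Function.mem_support.1 (Set.mem_toFinset.1 hw)) hy
  exact ⟨⟨_, ⟨hS, j, hj, hK.insert_mem hS hadj⟩, fun w hw => by simpa using hw⟩, y.2.2⟩

theorem pushToward_eq_self (x : (K.starCluster σ').space) : K.pushToward hne a t x.1 = x.1 := by
  obtain ⟨⟨s, ⟨-, v, hv, hvs⟩, hxs⟩, hx⟩ := x.2
  exact pushToward_of_farMass_eq_zero (farMass_eq_zero_of_mem_star hx.1 hv hvs hxs)

theorem continuousOn_shed (w : V) :
    ContinuousOn (fun x => K.shed hne x w) {x | ∀ v, 0 ≤ x v} := by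
  have hfar : Continuous (K.farMass hne) := by unfold farMass; fun_prop
  have hfarWith : Continuous (K.farMassWith hne w) := by unfold farMassWith; fun_prop
  refine ContinuousOn.mul_div_of_le (continuous_apply w).continuousOn hfar.continuousOn
    hfarWith.continuousOn (fun x hx => hx w) (fun x hx => le_farMassWith hx w) fun x hx => ?_
  rw [abs_of_nonneg (farMass_nonneg hx)]
  exact farMass_le_farMassWith hx w

theorem continuous_pushToward (L : ASC V) (a : V) :
    Continuous fun p : ℝ × L.space => K.pushToward hne a p.1 p.2.1 := by
  have hshed : Continuous fun p : ℝ × L.space => K.shed hne p.2.1 :=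
    continuous_pi fun w => (continuousOn_shed w).comp_continuous
      (continuous_subtype_val.comp continuous_snd) fun p => p.2.2.2.1
  unfold pushToward
  fun_prop

variable (K hne)

noncomputable def starClusterRetraction (hK : K.IsClique) (hσ : insert a σ' ∈ K.faces) :
    C((K.starCluster (insert a σ')).space, (K.starCluster σ').space) where
  toFun x := ⟨K.pushToward hne a 1 x.1, pushToward_one_mem_starCluster hK hσ x⟩
  continuous_toFun :=
    ((continuous_pushToward _ a).comp (continuous_const.prodMk continuous_id)).subtype_mk _

noncomputable def pushTowardHomotopy (hK : K.IsClique) (hσ : insert a σ' ∈ K.faces) :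
    Homotopy (ContinuousMap.id _)
      ((inclusion (K.starCluster_faces_mono (subset_insert a σ'))).comp
        (K.starClusterRetraction hne hK hσ)) where
  toFun p := ⟨K.pushToward hne a p.1 p.2.1, pushToward_mem_starCluster p.2 p.1.2⟩
  continuous_toFun :=
    ((continuous_pushToward _ a).comp
      ((continuous_subtype_val.comp continuous_fst).prodMk continuous_snd)).subtype_mk _
  map_zero_left _ := Subtype.ext pushToward_zero_left
  map_one_left _ := rfl

noncomputable def starClusterHomotopyEquiv (hK : K.IsClique) (hσ : insert a σ' ∈ K.faces) :
    (K.starCluster (insert a σ')).space ≃ₕ (K.starCluster σ').space where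
  toFun := K.starClusterRetraction hne hK hσ
  invFun := inclusion (K.starCluster_faces_mono (subset_insert a σ'))
  left_inv := ⟨(K.pushTowardHomotopy hne hK hσ).symm⟩
  right_inv := by
    have hretract : (K.starClusterRetraction hne hK hσ).comp
        (inclusion (K.starCluster_faces_mono (subset_insert a σ'))) = .id _ := by
      ext x : 1
      exact Subtype.ext (pushToward_eq_self x)
    exact hretract ▸ Homotopic.refl _

variable {K}

theorem contractibleSpace_starCluster_singleton {a : V} (ha : {a} ∈ K.faces) :
    ContractibleSpace (K.starCluster {a}).space := by
  let S : Set (V → ℝ) :=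
    {f | (∃ s ∈ (K.starCluster {a}).faces, ∀ v, f v ≠ 0 → v ∈ s) ∧ f ∈ stdSimplex ℝ V}
  have hcone : StarConvex ℝ (Pi.single a 1) S := by
    rintro f ⟨⟨s, ⟨-, v, hv, hvs⟩, hfs⟩, hf⟩ b c hb hc hbc
    obtain rfl := mem_singleton.1 hv
    refine ⟨⟨insert v s, ⟨hvs, v, hv, by rwa [insert_idem]⟩, fun w hw => ?_⟩,
      convex_stdSimplex ℝ V (single_mem_stdSimplex ℝ v) hf hb hc hbc⟩
    by_contra hws
    rw [mem_insert, not_or] at hws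
    have hfw : f w = 0 := by_contra fun h => hws.2 (hfs w h)
    simp [hws.1, hfw] at hw
  have hapex : Pi.single a 1 ∈ S :=
    ⟨⟨{a}, ⟨ha, a, mem_singleton_self a, by rwa [insert_eq_of_mem (mem_singleton_self a)]⟩,
      fun w hw => by by_contra h; simp_all⟩, single_mem_stdSimplex ℝ a⟩
  exact hcone.contractibleSpace ⟨_, hapex⟩

end Retraction

end ASC

/-- The star cluster of any simplex in a clique complex is contractible. -/
theorem statement1 {V : Type} [Fintype V] (K : ASC V) (hK : K.IsClique)
    (σ : Finset V) (hσ : σ ∈ K.faces) :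
    ContractibleSpace (K.starCluster σ).space := by
  induction K.nonempty_of_mem σ hσ using Finset.Nonempty.cons_induction with
  | singleton a => exact ASC.contractibleSpace_starCluster_singleton hσ
  | cons a σ' _ hne ih =>
    rw [Finset.cons_eq_insert] at hσ ⊢
    have := ih (K.down_closed _ hσ σ' (Finset.subset_insert a σ') hne)
    exact (K.starClusterHomotopyEquiv hne hK hσ).contractibleSpace
end

section
/- The independence complex of any finite forest (graph with no cycles) is either contractible or homotopy equivalent to a sphere. -/
attribute [local instance] Classical.propDecidable

/-!
Realize the independence complex of `G[S]` in the `ℓ¹` unit sphere of `ℝ^V` and induct on `S`.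
A vertex without neighbours in `S` makes the realization a cone. Otherwise, since `G` is a
forest, some `u ∈ S` has exactly one neighbour `w` in `S`. If `w` has a further neighbour `x`,
then `N(u) ⊆ N(x)`, and sliding the weight of `x` onto `u` deformation retracts the realization
onto that of `S \ {x}`. If not, `uw` is an isolated edge and the realization is the suspension
(join with `S⁰ = {u, w}`) of that of `S \ {u, w}`. Suspension preserves contractibility and, in
the `ℓ¹` model, turns the unit sphere of `ℝᵏ` into that of `ℝᵏ⁺¹`.
-/

open Metric
open scoped ContinuousMap

section Suspension

variable {X E F H : Type*} [TopologicalSpace X] [NormedAddCommGroup E] [NormedSpace ℝ E]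
  [NormedAddCommGroup F] [NormedSpace ℝ F] [NormedAddCommGroup H] [NormedSpace ℝ H]

theorem continuous_dite_smul_of_norm_le {c : X → ℝ} (hc : Continuous c) (hc0 : ∀ x, 0 ≤ c x)
    {g : {x // 0 < c x} → E} (hg : Continuous g) {M : ℝ} (hM : ∀ y, ‖g y‖ ≤ M) :
    Continuous fun x => if h : 0 < c x then c x • g ⟨x, h⟩ else 0 := by
  refine continuous_iff_continuousAt.2 fun x => ?_
  by_cases hx : 0 < c x
  · refine ContinuousOn.continuousAt ?_ ((isOpen_lt continuous_const hc).mem_nhds hx)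
    rw [continuousOn_iff_continuous_domRestrict]
    have hres : Set.domRestrict {y | 0 < c y}
        (fun x => if h : 0 < c x then c x • g ⟨x, h⟩ else 0) =
          fun y : {y // 0 < c y} => c y • g y :=
      funext fun y => dif_pos y.2
    rw [hres]
    exact (hc.comp continuous_subtype_val).smul hg
  · have hcx : c x = 0 := le_antisymm (not_lt.1 hx) (hc0 x)
    simp only [ContinuousAt, dif_neg hx]
    refine squeeze_zero_norm (a := fun y => c y * |M|) (fun y => ?_) ?_
    · split_ifs with hy
      · rw [norm_smul, Real.norm_of_nonneg hy.le]
        exact mul_le_mul_of_nonneg_left ((hM _).trans (le_abs_self M)) hy.le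
      · rw [norm_zero]
        exact mul_nonneg (hc0 y) (abs_nonneg M)
    · simpa [hcx] using (hc.tendsto x).mul_const |M|

/-- For `A` in the unit sphere of `E`, the join of `S⁰ = {±1}` with `A`, realised in `ℝ × E` as
the points `(β, x)` with `|β| + ‖x‖ = 1` and `x` in the cone over `A`. -/
def Set.suspension (A : Set E) : Set (ℝ × E) :=
  {p | |p.1| + ‖p.2‖ = 1 ∧ (p.2 = 0 ∨ ‖p.2‖⁻¹ • p.2 ∈ A)}

variable {A : Set E} {B : Set F} {C : Set H}

theorem mem_suspension_sphere_inter {P : E → Prop} (hP0 : P 0)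
    (hP : ∀ c : ℝ, 0 < c → ∀ x, P (c • x) ↔ P x) {p : ℝ × E} :
    p ∈ (sphere 0 1 ∩ {x | P x}).suspension ↔ |p.1| + ‖p.2‖ = 1 ∧ P p.2 := by
  refine and_congr_right fun _ => ?_
  rcases eq_or_ne p.2 0 with h | h
  · simp [h, hP0]
  · have hn : 0 < ‖p.2‖ := norm_pos_iff.2 h
    simp [h, hP _ (inv_pos.2 hn), norm_smul, hn.ne']

theorem mem_suspension_sphere {p : ℝ × E} :
    p ∈ (sphere (0 : E) 1).suspension ↔ |p.1| + ‖p.2‖ = 1 := by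
  refine and_iff_left_of_imp fun _ => ?_
  rcases eq_or_ne p.2 0 with h | h
  · exact Or.inl h
  · exact Or.inr (by simp [norm_smul, h])

noncomputable def suspensionFun (f : A → B) (p : A.suspension) : ℝ × F :=
  (p.1.1, if h : 0 < ‖p.1.2‖ then
    ‖p.1.2‖ • (f ⟨‖p.1.2‖⁻¹ • p.1.2, p.2.2.resolve_left (norm_pos_iff.1 h)⟩ : F) else 0)

theorem suspensionFun_mem (hB : B ⊆ sphere 0 1) (f : A → B) (p : A.suspension) :
    suspensionFun f p ∈ B.suspension := by
  obtain ⟨hp, -⟩ := p.2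
  unfold suspensionFun
  split_ifs with h
  · set b := f ⟨‖p.1.2‖⁻¹ • p.1.2, _⟩
    have hb : ‖(b : F)‖ = 1 := by simpa using hB b.2
    refine ⟨?_, Or.inr ?_⟩
    · simpa [norm_smul, hb] using hp
    · simp [norm_smul, hb, smul_smul, h.ne']
  · have : ‖p.1.2‖ = 0 := le_antisymm (not_lt.1 h) (norm_nonneg _)
    exact ⟨by simpa [this] using hp, Or.inl rfl⟩

/-- Stated for a continuous family of maps, so that it also covers homotopies. -/
theorem continuous_suspensionFun (hB : B ⊆ sphere 0 1) (f : X → A → B)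
    (hf : Continuous fun q : X × A => f q.1 q.2) :
    Continuous fun q : X × A.suspension => suspensionFun (f q.1) q.2 := by
  refine Continuous.prodMk (by fun_prop) ?_
  refine continuous_dite_smul_of_norm_le (c := fun q : X × A.suspension => ‖q.2.1.2‖)
    (by fun_prop) (fun _ => norm_nonneg _)
    (g := fun y => (f y.1.1 ⟨‖y.1.2.1.2‖⁻¹ • y.1.2.1.2,
      y.1.2.2.2.resolve_left (norm_pos_iff.1 y.2)⟩ : F)) (M := 1) ?_ ?_
  · refine continuous_subtype_val.comp (hf.comp (Continuous.prodMk (by fun_prop) ?_))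
    exact Continuous.subtype_mk (((by fun_prop : Continuous fun y : {q : X × A.suspension //
      0 < ‖q.2.1.2‖} => ‖y.1.2.1.2‖).inv₀ fun y => y.2.ne').smul (by fun_prop)) _
  · exact fun y => (mem_sphere_zero_iff_norm.1 (hB (f _ _).2)).le

noncomputable def suspensionMap (hB : B ⊆ sphere 0 1) (f : C(A, B)) :
    C(A.suspension, B.suspension) where
  toFun p := ⟨suspensionFun f p, suspensionFun_mem hB f p⟩
  continuous_toFun := ((continuous_suspensionFun (X := Unit) hB (fun _ => f)
    (by fun_prop)).comp (by fun_prop : Continuous fun p : A.suspension => ((), p))).subtype_mk _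

theorem suspensionMap_id (hA : A ⊆ sphere 0 1) :
    suspensionMap hA (ContinuousMap.id A) = ContinuousMap.id _ := by
  ext p : 2
  refine Prod.ext rfl ?_
  change dite _ _ _ = _
  split_ifs with h
  · simp [smul_smul, h.ne']
  · simpa [eq_comm] using h

theorem suspensionMap_comp (hB : B ⊆ sphere 0 1) (hC : C ⊆ sphere 0 1) (g : C(B, C))
    (f : C(A, B)) :
    suspensionMap hC (g.comp f) = (suspensionMap hC g).comp (suspensionMap hB f) := by
  ext p : 2
  refine Prod.ext rfl ?_
  change dite _ _ _ = dite _ _ _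
  by_cases h : 0 < ‖p.1.2‖
  · set b := f ⟨‖p.1.2‖⁻¹ • p.1.2, p.2.2.resolve_left (norm_pos_iff.1 h)⟩
    have hb : ‖(b : F)‖ = 1 := by simpa using hB b.2
    have hq : ((suspensionMap hB f p) : ℝ × F).2 = ‖p.1.2‖ • (b : F) := dif_pos h
    simp only [hq, norm_smul, norm_norm, hb, mul_one, dif_pos h, smul_smul,
      inv_mul_cancel₀ h.ne', one_smul, Subtype.coe_eta, ContinuousMap.comp_apply, b]
  · have hq : ((suspensionMap hB f p) : ℝ × F).2 = 0 := dif_neg h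
    simp [hq, h]

noncomputable def ContinuousMap.Homotopy.suspension (hB : B ⊆ sphere 0 1) {f₀ f₁ : C(A, B)}
    (K : f₀.Homotopy f₁) : (suspensionMap hB f₀).Homotopy (suspensionMap hB f₁) where
  toFun q := ⟨suspensionFun (fun a => K (q.1, a)) q.2, suspensionFun_mem hB _ q.2⟩
  continuous_toFun :=
    (continuous_suspensionFun hB (fun t a => K (t, a)) K.continuous).subtype_mk _
  map_zero_left p := by simp [suspensionMap]
  map_one_left p := by simp [suspensionMap]

theorem ContinuousMap.Homotopic.suspension (hB : B ⊆ sphere 0 1) {f₀ f₁ : C(A, B)}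
    (h : f₀.Homotopic f₁) : (suspensionMap hB f₀).Homotopic (suspensionMap hB f₁) :=
  h.map (·.suspension hB)

noncomputable def ContinuousMap.HomotopyEquiv.suspension (hA : A ⊆ sphere 0 1)
    (hB : B ⊆ sphere 0 1) (e : A ≃ₕ B) : A.suspension ≃ₕ B.suspension where
  toFun := suspensionMap hB e.toFun
  invFun := suspensionMap hA e.invFun
  left_inv := by
    rw [← suspensionMap_comp hB hA, ← suspensionMap_id hA]
    exact e.left_inv.suspension hA
  right_inv := by
    rw [← suspensionMap_comp hA hB, ← suspensionMap_id hB]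
    exact e.right_inv.suspension hB

theorem mem_suspension_singleton_one {p : ℝ × ℝ} :
    p ∈ ({1} : Set ℝ).suspension ↔ |p.1| + |p.2| = 1 ∧ 0 ≤ p.2 := by
  simp only [Set.suspension, Set.mem_ofPred_eq, Set.mem_singleton_iff, Real.norm_eq_abs,
    smul_eq_mul]
  refine and_congr_right fun _ => ?_
  rcases lt_trichotomy p.2 0 with h | h | h
  · norm_num [abs_of_neg h, h.ne, h.not_ge]
  · simp [h]
  · simp [abs_of_pos h, h.ne', h.le]

theorem starConvex_suspension_singleton_one :
    StarConvex ℝ ((0 : ℝ), (1 : ℝ)) ({1} : Set ℝ).suspension := by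
  intro p hp a b ha hb hab
  rw [mem_suspension_singleton_one] at hp ⊢
  obtain ⟨h1, h2⟩ := hp
  rw [abs_of_nonneg h2] at h1
  simp only [Prod.fst_add, Prod.snd_add, Prod.smul_fst, Prod.smul_snd, smul_eq_mul, mul_zero,
    zero_add, mul_one]
  have h3 : 0 ≤ a + b * p.2 := by positivity
  refine ⟨?_, h3⟩
  rw [abs_mul, abs_of_nonneg hb, abs_of_nonneg h3]
  linear_combination b * h1 + hab

/-- A contractible `A` is homotopy equivalent to the point `{1}` of the unit sphere of `ℝ`, and
the suspension of that point is an arc. -/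
theorem contractibleSpace_suspension (hA : A ⊆ sphere 0 1) [ContractibleSpace A] :
    ContractibleSpace A.suspension := by
  obtain ⟨e⟩ := ContractibleSpace.hequiv A ({1} : Set ℝ)
  have : ContractibleSpace ({1} : Set ℝ).suspension :=
    starConvex_suspension_singleton_one.contractibleSpace
      ⟨(0, 1), mem_suspension_singleton_one.2 (by norm_num)⟩
  exact (e.suspension hA (by simp)).contractibleSpace

end Suspension

section Spheres

variable {E F : Type*} [NormedAddCommGroup E] [NormedSpace ℝ E]
  [NormedAddCommGroup F] [NormedSpace ℝ F]

theorem ContinuousLinearEquiv.norm_pos_of_norm_eq_one (e : E ≃L[ℝ] F) {x : E} (hx : ‖x‖ = 1) :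
    0 < ‖e x‖ :=
  norm_pos_iff.2 (e.map_ne_zero_iff.2 (norm_ne_zero_iff.1 (by simp [hx])))

theorem ContinuousLinearEquiv.normalize_symm_normalize (e : E ≃L[ℝ] F) {x : E} (hx : ‖x‖ = 1) :
    ‖e.symm (‖e x‖⁻¹ • e x)‖⁻¹ • e.symm (‖e x‖⁻¹ • e x) = x := by
  simp [norm_smul, hx, smul_smul, (e.norm_pos_of_norm_eq_one hx).ne']

noncomputable def ContinuousLinearEquiv.sphereHomeomorph (e : E ≃L[ℝ] F) :
    sphere (0 : E) 1 ≃ₜ sphere (0 : F) 1 where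
  toFun x := ⟨‖e x‖⁻¹ • e x, by
    simp [norm_smul, (e.norm_pos_of_norm_eq_one (norm_eq_of_mem_sphere x)).ne']⟩
  invFun y := ⟨‖e.symm y‖⁻¹ • e.symm y, by
    simp [norm_smul, (e.symm.norm_pos_of_norm_eq_one (norm_eq_of_mem_sphere y)).ne']⟩
  left_inv x := Subtype.ext (e.normalize_symm_normalize (norm_eq_of_mem_sphere x))
  right_inv y := Subtype.ext (by
    simpa using e.symm.normalize_symm_normalize (norm_eq_of_mem_sphere y))
  continuous_toFun := by
    refine Continuous.subtype_mk (Continuous.smul ?_ (by fun_prop)) _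
    exact (by fun_prop : Continuous fun x : sphere (0 : E) 1 => ‖e x‖).inv₀
      fun x => (e.norm_pos_of_norm_eq_one (norm_eq_of_mem_sphere x)).ne'
  continuous_invFun := by
    refine Continuous.subtype_mk (Continuous.smul ?_ (by fun_prop)) _
    exact (by fun_prop : Continuous fun y : sphere (0 : F) 1 => ‖e.symm y‖).inv₀
      fun y => (e.symm.norm_pos_of_norm_eq_one (norm_eq_of_mem_sphere y)).ne'

theorem PiLp.norm_eq_sum_of_nonneg {ι : Type*} [Fintype ι] {x : PiLp 1 fun _ : ι => ℝ}
    (hx : ∀ i, 0 ≤ x i) : ‖x‖ = ∑ i, x i := by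
  simp [PiLp.norm_eq_of_L1, abs_of_nonneg (hx _)]

theorem PiLp.norm_toLp_snoc {k : ℕ} (x : PiLp 1 fun _ : Fin k => ℝ) (β : ℝ) :
    ‖WithLp.toLp 1 (Fin.snoc (α := fun _ => ℝ) x.ofLp β)‖ = ‖x‖ + |β| := by
  simp [PiLp.norm_eq_of_L1, Fin.sum_univ_castSucc]

noncomputable def suspensionSphereHomeomorph (k : ℕ) :
    (sphere (0 : PiLp 1 fun _ : Fin k => ℝ) 1).suspension ≃ₜ
      sphere (0 : PiLp 1 fun _ : Fin (k + 1) => ℝ) 1 where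
  toFun p := ⟨WithLp.toLp 1 (Fin.snoc (α := fun _ => ℝ) p.1.2.ofLp p.1.1), by
    simpa [PiLp.norm_toLp_snoc, add_comm] using mem_suspension_sphere.1 p.2⟩
  invFun y := ⟨(y.1 (Fin.last k), WithLp.toLp 1 (Fin.init y.1.ofLp)), by
    have := PiLp.norm_toLp_snoc (WithLp.toLp 1 (Fin.init y.1.ofLp)) (y.1 (Fin.last k))
    rw [WithLp.ofLp_toLp, Fin.snoc_init_self, WithLp.toLp_ofLp, norm_eq_of_mem_sphere] at this
    rw [mem_suspension_sphere]
    linarith⟩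
  left_inv p := by ext <;> simp
  right_inv y := by ext; simp
  continuous_toFun := by
    refine Continuous.subtype_mk ((PiLp.continuous_toLp 1 _).comp (Continuous.finSnoc ?_ ?_)) _
      <;> fun_prop
  continuous_invFun := by
    refine Continuous.subtype_mk (Continuous.prodMk (by fun_prop) ?_) _
    exact (PiLp.continuous_toLp 1 _).comp (Continuous.finInit (by fun_prop))

end Spheres

section ContractibleOrSphere

def ContractibleOrSphere (X : Type*) [TopologicalSpace X] : Prop :=
  ContractibleSpace X ∨ ∃ k : ℕ, Nonempty (X ≃ₕ sphere (0 : PiLp 1 fun _ : Fin k => ℝ) 1)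

variable {X Y : Type*} [TopologicalSpace X] [TopologicalSpace Y]

theorem ContractibleOrSphere.of_homotopyEquiv (e : X ≃ₕ Y) (h : ContractibleOrSphere Y) :
    ContractibleOrSphere X := by
  rcases h with h | ⟨k, ⟨e'⟩⟩
  exacts [Or.inl e.contractibleSpace, Or.inr ⟨k, ⟨e.trans e'⟩⟩]

theorem ContractibleOrSphere.suspension {E : Type*} [NormedAddCommGroup E] [NormedSpace ℝ E]
    {A : Set E} (hA : A ⊆ sphere 0 1) (h : ContractibleOrSphere A) :
    ContractibleOrSphere A.suspension := by
  rcases h with h | ⟨k, ⟨e⟩⟩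
  · exact Or.inl (contractibleSpace_suspension hA)
  · exact Or.inr ⟨k + 1, ⟨(e.suspension hA subset_rfl).trans
      (suspensionSphereHomeomorph k).toHomotopyEquiv⟩⟩

end ContractibleOrSphere

theorem nonempty_homotopyEquiv_of_deformation {T : Type*} [TopologicalSpace T] {X Y : Set T}
    (hXY : X ⊆ Y) (h : C(unitInterval × T, T)) (h₀ : ∀ y, h (0, y) = y)
    (hY : ∀ t, ∀ y ∈ Y, h (t, y) ∈ Y) (h₁ : ∀ y ∈ Y, h (1, y) ∈ X)
    (hX : ∀ x ∈ X, h (1, x) = x) : Nonempty (Y ≃ₕ X) := by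
  let r : C(Y, X) := ⟨fun y => ⟨h (1, y), h₁ y y.2⟩, by fun_prop⟩
  refine ⟨{ toFun := r, invFun := ContinuousMap.inclusion hXY, left_inv := ?_, right_inv := ?_ }⟩
  · refine ContinuousMap.Homotopic.symm ⟨{
      toFun := fun q => ⟨h (q.1, q.2), hY q.1 q.2 q.2.2⟩
      map_zero_left := fun y => Subtype.ext (h₀ y)
      map_one_left := fun y => rfl }⟩
  · convert ContinuousMap.Homotopic.refl (ContinuousMap.id X)
    ext x
    exact hX x x.2

theorem SimpleGraph.IsAcyclic.exists_mem_forall_adj_eq {V : Type*} [Finite V]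
    {G : SimpleGraph V} (hG : G.IsAcyclic) {S : Finset V} (hS : S.Nonempty) :
    ∃ u ∈ S, ∃ w, ∀ y ∈ S, G.Adj u y → y = w := by
  have : Nonempty (S : Set V) := hS.coe_sort
  obtain ⟨⟨u, hu⟩, v, p, hp, hmax⟩ :=
    SimpleGraph.Walk.exists_isPath_forall_isPath_length_le_length (G.induce (S : Set V))
  refine ⟨u, hu, p.snd, fun y hy hadj => ?_⟩
  have hadj' : (G.induce (S : Set V)).Adj ⟨u, hu⟩ ⟨y, hy⟩ := hadj
  have hmem : (⟨y, hy⟩ : (S : Set V)) ∈ p.support := by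
    by_contra h
    simpa using hmax _ _ (p.cons hadj'.symm) (hp.cons h)
  exact congrArg Subtype.val ((hG.induce _).eq_snd_of_adj_start hp hadj' hmem)

namespace SimpleGraph

variable {V : Type*} {G : SimpleGraph V} {S T : Finset V} {x y : V → ℝ}

variable (G) in
/-- `x` lies in the cone over the realization of the independence complex of `G[S]`. -/
structure IsIndepWeight (S : Finset V) (x : V → ℝ) : Prop where
  nonneg : ∀ v, 0 ≤ x v
  mem_of_ne_zero : ∀ v, x v ≠ 0 → v ∈ S
  not_adj : ∀ v w, x v ≠ 0 → x w ≠ 0 → ¬ G.Adj v w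

theorem IsIndepWeight.of_support (hx : G.IsIndepWeight S x) (hy : ∀ v, 0 ≤ y v)
    (hyx : ∀ v, y v ≠ 0 → x v ≠ 0 ∧ v ∈ T) : G.IsIndepWeight T y :=
  ⟨hy, fun v hv => (hyx v hv).2, fun v w hv hw => hx.not_adj v w (hyx v hv).1 (hyx w hw).1⟩

theorem IsIndepWeight.mono (hx : G.IsIndepWeight S x) (hST : S ⊆ T) : G.IsIndepWeight T x :=
  hx.of_support hx.nonneg fun v hv => ⟨hv, hST (hx.mem_of_ne_zero v hv)⟩

theorem IsIndepWeight.erase (hx : G.IsIndepWeight S x) {v : V} (hv : x v = 0) :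
    G.IsIndepWeight (S.erase v) x :=
  hx.of_support hx.nonneg fun w hw =>
    ⟨hw, Finset.mem_erase.2 ⟨fun h => hw (h ▸ hv), hx.mem_of_ne_zero w hw⟩⟩

theorem isIndepWeight_zero : G.IsIndepWeight S 0 :=
  ⟨fun _ => le_rfl, fun _ h => absurd rfl h, fun _ _ h => absurd rfl h⟩

theorem IsIndepWeight.smul (hx : G.IsIndepWeight S x) {c : ℝ} (hc : 0 ≤ c) :
    G.IsIndepWeight S (c • x) :=
  hx.of_support (fun v => mul_nonneg hc (hx.nonneg v))
    fun v hv => ⟨right_ne_zero_of_mul hv, hx.mem_of_ne_zero v (right_ne_zero_of_mul hv)⟩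

theorem isIndepWeight_smul_iff {c : ℝ} (hc : 0 < c) :
    G.IsIndepWeight S (c • x) ↔ G.IsIndepWeight S x :=
  ⟨fun h => by simpa [smul_smul, hc.ne'] using h.smul (inv_nonneg.2 hc.le), (·.smul hc.le)⟩

theorem IsIndepWeight.add_single (hx : G.IsIndepWeight S x) {u : V} (hu : u ∈ S) {a : ℝ}
    (ha : 0 ≤ a) (hux : a ≠ 0 → ∀ v, x v ≠ 0 → ¬ G.Adj u v) :
    G.IsIndepWeight S (x + Pi.single u a) := by
  have hsupp : ∀ v, (x + Pi.single u a : V → ℝ) v ≠ 0 → x v ≠ 0 ∨ (v = u ∧ a ≠ 0) := by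
    intro v hv
    by_contra! h
    by_cases hvu : v = u
    · subst hvu
      simp [h.1, h.2 rfl] at hv
    · simp [hvu, h.1] at hv
  refine ⟨fun v => add_nonneg (hx.nonneg v) ?_, fun v hv => ?_, fun v w hv hw => ?_⟩
  · by_cases hvu : v = u <;> simp [hvu, ha]
  · rcases hsupp v hv with h | ⟨rfl, -⟩
    exacts [hx.mem_of_ne_zero v h, hu]
  · rcases hsupp v hv with h | ⟨rfl, ha⟩ <;> rcases hsupp w hw with h' | ⟨rfl, ha'⟩
    · exact hx.not_adj v w h h'
    · exact fun hadj => hux ha' v h hadj.symm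
    · exact hux ha w h'
    · exact G.irrefl

theorem IsIndepWeight.fold (hx : G.IsIndepWeight S x) {u x₀ : V} (hu : u ∈ S)
    (hN : ∀ y ∈ S, G.Adj u y → G.Adj x₀ y) {c : ℝ} (hc0 : 0 ≤ c) (hc : c ≤ x x₀) :
    G.IsIndepWeight S (x - Pi.single x₀ c + Pi.single u c) := by
  have hsupp : ∀ v, (x - Pi.single x₀ c : V → ℝ) v ≠ 0 → x v ≠ 0 := by
    intro v hv h
    by_cases hv0 : v = x₀
    · subst hv0
      simp [h, le_antisymm (h ▸ hc) hc0] at hv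
    · simp [hv0, h] at hv
  refine (hx.of_support (fun v => ?_) fun v hv =>
    ⟨hsupp v hv, hx.mem_of_ne_zero v (hsupp v hv)⟩).add_single hu hc0 ?_
  · by_cases hv0 : v = x₀
    · subst hv0; simpa using hc
    · simpa [hv0] using hx.nonneg v
  · intro hc' v hv hadj
    have hx₀ : x x₀ ≠ 0 := (lt_of_lt_of_le (lt_of_le_of_ne hc0 (Ne.symm hc')) hc).ne'
    exact hx.not_adj x₀ v hx₀ (hsupp v hv) (hN v (hx.mem_of_ne_zero v (hsupp v hv)) hadj)

variable [Fintype V]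

variable (G) in
/-- The geometric realization of the independence complex of `G[S]`, as a subset of the `ℓ¹`
unit sphere of `ℝ^V`. -/
def indepRealization (S : Finset V) : Set (PiLp 1 fun _ : V => ℝ) :=
  sphere 0 1 ∩ {x | G.IsIndepWeight S x}

theorem indepRealization_subset_sphere : G.indepRealization S ⊆ sphere 0 1 :=
  Set.inter_subset_left

theorem mem_indepRealization {x : PiLp 1 fun _ : V => ℝ} :
    x ∈ G.indepRealization S ↔ G.IsIndepWeight S x ∧ ∑ v, x v = 1 := by
  rw [indepRealization, Set.mem_inter_iff, mem_sphere_zero_iff_norm, and_comm]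
  exact and_congr_right fun hx => by rw [PiLp.norm_eq_sum_of_nonneg hx.nonneg]

theorem mem_suspension_indepRealization {p : ℝ × PiLp 1 fun _ : V => ℝ} :
    p ∈ (G.indepRealization S).suspension ↔ |p.1| + ‖p.2‖ = 1 ∧ G.IsIndepWeight S p.2 :=
  mem_suspension_sphere_inter isIndepWeight_zero fun _ hc _ => isIndepWeight_smul_iff hc

theorem indepRealization_empty : G.indepRealization ∅ = ∅ := by
  refine Set.eq_empty_of_forall_notMem fun x hx => ?_
  rw [mem_indepRealization] at hx
  have : ∀ v, x v = 0 := fun v => by_contra fun h => by simpa using hx.1.mem_of_ne_zero v h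
  simp [this] at hx

theorem contractibleOrSphere_indepRealization_empty :
    ContractibleOrSphere (G.indepRealization ∅) := by
  have : IsEmpty (sphere (0 : PiLp 1 fun _ : Fin 0 => ℝ) 1) :=
    ⟨fun x => by simpa [Subsingleton.elim x.1 0] using x.2⟩
  rw [indepRealization_empty]
  exact Or.inr ⟨0, ⟨Homeomorph.empty.toHomotopyEquiv⟩⟩

theorem starConvex_indepRealization {v : V} (hv : v ∈ S) (hiso : ∀ w ∈ S, ¬ G.Adj v w) :
    StarConvex ℝ (PiLp.single 1 v 1) (G.indepRealization S) := by
  intro y hy a b ha hb hab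
  rw [mem_indepRealization] at hy ⊢
  have hsplit : (a • PiLp.single 1 v 1 + b • y).ofLp = b • y.ofLp + Pi.single v a := by
    ext w; by_cases hw : w = v <;> simp [hw, add_comm]
  rw [hsplit]
  refine ⟨(hy.1.smul hb).add_single hv ha fun _ w hw =>
    hiso w ((hy.1.smul hb).mem_of_ne_zero w hw), ?_⟩
  simp [Finset.sum_add_distrib, ← Finset.mul_sum, hy.2]
  linarith

theorem contractibleSpace_indepRealization {v : V} (hv : v ∈ S) (hiso : ∀ w ∈ S, ¬ G.Adj v w) :
    ContractibleSpace (G.indepRealization S) := by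
  refine (starConvex_indepRealization hv hiso).contractibleSpace ⟨PiLp.single 1 v 1, ?_⟩
  rw [mem_indepRealization, PiLp.ofLp_single]
  exact ⟨by simpa using isIndepWeight_zero.add_single hv zero_le_one fun _ w hw => absurd rfl hw,
    by simp⟩

theorem nonempty_homotopyEquiv_indepRealization_erase {u x₀ : V} (hu : u ∈ S) (hux : u ≠ x₀)
    (hN : ∀ y ∈ S, G.Adj u y → G.Adj x₀ y) :
    Nonempty (G.indepRealization S ≃ₕ G.indepRealization (S.erase x₀)) := by
  let slide : C(unitInterval × PiLp 1 (fun _ : V => ℝ), PiLp 1 fun _ : V => ℝ) :=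
    ⟨fun q => q.2 + (q.1 * q.2 x₀) • (PiLp.single 1 u 1 - PiLp.single 1 x₀ 1), by fun_prop⟩
  have hslide : ∀ q, (slide q).ofLp =
      q.2.ofLp - Pi.single x₀ (q.1 * q.2 x₀) + Pi.single u (q.1 * q.2 x₀) := by
    intro q; ext v
    by_cases hvu : v = u <;> by_cases hv0 : v = x₀ <;> simp [slide, hvu, hv0, hux, hux.symm]
    ring
  have hmem : ∀ t, ∀ f ∈ G.indepRealization S, slide (t, f) ∈ G.indepRealization S := by
    intro t f hf
    rw [mem_indepRealization] at hf ⊢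
    rw [hslide]
    refine ⟨hf.1.fold hu hN (mul_nonneg t.2.1 (hf.1.nonneg x₀))
      (mul_le_of_le_one_left (hf.1.nonneg x₀) t.2.2), ?_⟩
    simp [Finset.sum_add_distrib, Finset.sum_sub_distrib, hf.2]
  refine nonempty_homotopyEquiv_of_deformation (fun f hf => ?_) slide (fun f => by simp [slide])
    hmem (fun f hf => ?_) (fun f hf => ?_)
  · rw [mem_indepRealization] at hf ⊢
    exact ⟨hf.1.mono (Finset.erase_subset _ _), hf.2⟩
  · have := hmem 1 f hf
    rw [mem_indepRealization] at this ⊢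
    refine ⟨this.1.erase ?_, this.2⟩
    simp [hslide, hux.symm]
  · have : f x₀ = 0 := by
      by_contra h
      simpa using (mem_indepRealization.1 hf).1.mem_of_ne_zero x₀ h
    simp [slide, this]

section IsolatedEdge

variable {u w : V}

theorem eq_zero_or_eq_zero_of_mem_indepRealization (huw : G.Adj u w)
    {f : PiLp 1 fun _ : V => ℝ} (hf : f ∈ G.indepRealization S) : f u = 0 ∨ f w = 0 := by
  by_contra! h
  exact (mem_indepRealization.1 hf).1.not_adj u w h.1 h.2 huw

theorem ofLp_eq_restrict_add_single_add_single (huw : u ≠ w) {f : PiLp 1 fun _ : V => ℝ}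
    (hf : f ∈ G.indepRealization S) :
    f.ofLp = (fun v => if v ∈ (S.erase u).erase w then f v else 0) + Pi.single u (f u) +
      Pi.single w (f w) := by
  ext v
  by_cases hvu : v = u
  · subst hvu; simp [huw]
  by_cases hvw : v = w
  · subst hvw; simp [huw.symm]
  by_cases hvS : v ∈ S
  · simp [hvu, hvw, hvS]
  · have : f v = 0 := by_contra fun h => hvS ((mem_indepRealization.1 hf).1.mem_of_ne_zero v h)
    simp [hvu, hvw, hvS, this]

theorem restrict_mem_suspension_indepRealization (huw : G.Adj u w)
    {f : PiLp 1 fun _ : V => ℝ} (hf : f ∈ G.indepRealization S) :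
    (f u - f w, WithLp.toLp 1 fun v => if v ∈ (S.erase u).erase w then f v else 0) ∈
      (G.indepRealization ((S.erase u).erase w)).suspension := by
  obtain ⟨hf₁, hsum⟩ := mem_indepRealization.1 hf
  have hrestr : G.IsIndepWeight ((S.erase u).erase w)
      fun v => if v ∈ (S.erase u).erase w then f v else 0 :=
    hf₁.of_support (fun v => by split_ifs <;> simp [hf₁.nonneg v])
      fun v hv => by by_cases h : v ∈ (S.erase u).erase w <;> simp_all
  refine mem_suspension_indepRealization.2 ⟨?_, hrestr⟩
  rw [ofLp_eq_restrict_add_single_add_single huw.ne hf] at hsum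
  simp only [Pi.add_apply, Finset.sum_add_distrib, Finset.sum_pi_single'] at hsum
  rw [PiLp.norm_eq_sum_of_nonneg hrestr.nonneg, WithLp.ofLp_toLp]
  rcases eq_zero_or_eq_zero_of_mem_indepRealization huw hf with h | h <;>
    simp only [h, Finset.mem_univ, if_true] at hsum ⊢
  · rw [zero_sub, abs_neg, abs_of_nonneg (hf₁.nonneg w)]; linarith
  · rw [sub_zero, abs_of_nonneg (hf₁.nonneg u)]; linarith

theorem add_single_mem_indepRealization (hu : u ∈ S) (hw : w ∈ S)
    (hNu : ∀ y ∈ S, G.Adj u y → y = w) (hNw : ∀ y ∈ S, G.Adj w y → y = u)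
    {p : ℝ × PiLp 1 fun _ : V => ℝ}
    (hp : p ∈ (G.indepRealization ((S.erase u).erase w)).suspension) :
    WithLp.toLp 1 (p.2.ofLp + Pi.single u (max p.1 0) + Pi.single w (max (-p.1) 0)) ∈
      G.indepRealization S := by
  obtain ⟨hnorm, hp⟩ := mem_suspension_indepRealization.1 hp
  have hL : ∀ v, p.2 v ≠ 0 → v ≠ u ∧ v ≠ w ∧ v ∈ S := fun v hv => by
    have := hp.mem_of_ne_zero v hv
    simp only [Finset.mem_erase] at this
    exact ⟨this.2.1, this.1, this.2.2⟩
  rw [mem_indepRealization, WithLp.ofLp_toLp]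
  refine ⟨((hp.mono ((Finset.erase_subset _ _).trans (Finset.erase_subset _ _))).add_single hu
    (le_max_right _ _) fun _ v hv hadj => (hL v hv).2.1 (hNu v (hL v hv).2.2 hadj)).add_single hw
    (le_max_right _ _) fun hβ v hv hadj => ?_, ?_⟩
  · have : max p.1 0 = 0 :=
      max_eq_right (by contrapose! hβ; exact max_eq_right (by linarith))
    simp only [this, Pi.single_zero, add_zero] at hv
    exact (hL v hv).1 (hNw v (hL v hv).2.2 hadj)
  · simp [Finset.sum_add_distrib, ← PiLp.norm_eq_sum_of_nonneg hp.nonneg]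
    linarith [max_zero_add_max_neg_zero_eq_abs_self p.1]

noncomputable def indepRealizationHomeomorphSuspension (hu : u ∈ S) (hw : w ∈ S)
    (huw : G.Adj u w) (hNu : ∀ y ∈ S, G.Adj u y → y = w) (hNw : ∀ y ∈ S, G.Adj w y → y = u) :
    G.indepRealization S ≃ₜ (G.indepRealization ((S.erase u).erase w)).suspension where
  toFun f := ⟨_, restrict_mem_suspension_indepRealization huw f.2⟩
  invFun p := ⟨_, add_single_mem_indepRealization hu hw hNu hNw p.2⟩
  left_inv f := by
    refine Subtype.ext (WithLp.ofLp_injective 1 ?_)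
    conv_rhs => rw [ofLp_eq_restrict_add_single_add_single huw.ne f.2]
    have hu0 := (mem_indepRealization.1 f.2).1.nonneg u
    have hw0 := (mem_indepRealization.1 f.2).1.nonneg w
    rcases eq_zero_or_eq_zero_of_mem_indepRealization huw f.2 with h | h <;>
      simp [h, hu0, hw0]
  right_inv p := by
    have hL := (mem_suspension_indepRealization.1 p.2).2.mem_of_ne_zero
    refine Subtype.ext (Prod.ext ?_ (PiLp.ext fun v => ?_))
    · have hpu : p.1.2 u = 0 := by_contra fun h => by simpa using hL u h
      have hpw : p.1.2 w = 0 := by_contra fun h => by simpa using hL w h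
      simp [hpu, hpw, huw.ne, huw.ne']
    · by_cases hv : v ∈ (S.erase u).erase w
      · obtain ⟨hvw, hvu, -⟩ : v ≠ w ∧ v ≠ u ∧ v ∈ S := by simpa using hv
        simp [hv, hvu, hvw]
      · have : p.1.2 v = 0 := by_contra fun h => hv (hL v h)
        simp [hv, this]
  continuous_toFun := by
    refine Continuous.subtype_mk (Continuous.prodMk (by fun_prop) ?_) _
    exact (PiLp.continuous_toLp 1 _).comp (continuous_pi fun v => by split_ifs <;> fun_prop)
  continuous_invFun := by
    refine Continuous.subtype_mk ((PiLp.continuous_toLp 1 _).comp ?_) _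
    exact ((by fun_prop : Continuous fun p : (G.indepRealization ((S.erase u).erase w)).suspension
      => p.1.2.ofLp).add ((continuous_single u).comp (by fun_prop))).add
      ((continuous_single w).comp (by fun_prop))

end IsolatedEdge

theorem contractibleOrSphere_indepRealization (hG : G.IsAcyclic) (S : Finset V) :
    ContractibleOrSphere (G.indepRealization S) := by
  induction S using Finset.strongInduction with
  | H S ih =>
  rcases S.eq_empty_or_nonempty with rfl | hS
  · exact contractibleOrSphere_indepRealization_empty
  by_cases hiso : ∃ v ∈ S, ∀ w ∈ S, ¬ G.Adj v w
  · obtain ⟨v, hv, hiso⟩ := hiso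
    exact Or.inl (contractibleSpace_indepRealization hv hiso)
  push Not at hiso
  obtain ⟨u, hu, w', hNu⟩ := hG.exists_mem_forall_adj_eq hS
  obtain ⟨w, hw, huw⟩ := hiso u hu
  obtain rfl := hNu w hw huw
  by_cases hfold : ∃ x ∈ S, G.Adj w x ∧ x ≠ u
  · obtain ⟨x, hx, hwx, hxu⟩ := hfold
    obtain ⟨e⟩ := nonempty_homotopyEquiv_indepRealization_erase hu hxu.symm
      fun y hy h => hNu y hy h ▸ hwx.symm
    exact (ih _ (Finset.erase_ssubset hx)).of_homotopyEquiv e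
  · push Not at hfold
    have hsub : (S.erase u).erase w ⊂ S :=
      (Finset.erase_subset _ _).trans_ssubset (Finset.erase_ssubset hu)
    exact ((ih _ hsub).suspension indepRealization_subset_sphere).of_homotopyEquiv
      (indepRealizationHomeomorphSuspension hu hw huw hNu hfold).toHomotopyEquiv

end SimpleGraph

theorem SimpleGraph.mem_indepComplex_space_iff {V : Type} [Fintype V] (G : SimpleGraph V)
    (f : V → ℝ) :
    ((∃ s ∈ G.indepComplex.faces, ∀ v, f v ≠ 0 → v ∈ s) ∧ (∀ v, 0 ≤ f v) ∧ ∑ v, f v = 1) ↔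
      WithLp.toLp 1 f ∈ G.indepRealization Finset.univ := by
  rw [mem_indepRealization, WithLp.ofLp_toLp]
  constructor
  · rintro ⟨⟨s, hs, hsupp⟩, hnn, hsum⟩
    exact ⟨⟨hnn, fun v _ => Finset.mem_univ v,
      fun v w hv hw => hs.2 v (hsupp v hv) w (hsupp w hw)⟩, hsum⟩
  · rintro ⟨⟨hnn, -, hind⟩, hsum⟩
    obtain ⟨v, -, hv⟩ := Finset.exists_ne_zero_of_sum_ne_zero (hsum.trans_ne one_ne_zero)
    refine ⟨⟨Finset.univ.filter (f · ≠ 0), ⟨⟨v, by simpa using hv⟩, fun v hv w hw =>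
      hind v w (by simpa using hv) (by simpa using hw)⟩, fun v hv => by simpa using hv⟩,
      hnn, hsum⟩

noncomputable def SimpleGraph.indepComplexSpaceHomeomorph {V : Type} [Fintype V]
    (G : SimpleGraph V) : G.indepComplex.space ≃ₜ G.indepRealization Finset.univ where
  toFun f := ⟨WithLp.toLp 1 f.1, (G.mem_indepComplex_space_iff f.1).1 f.2⟩
  invFun x := ⟨x.1.ofLp, (G.mem_indepComplex_space_iff x.1.ofLp).2 x.2⟩
  continuous_toFun := ((PiLp.continuous_toLp 1 _).comp continuous_subtype_val).subtype_mk _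
  continuous_invFun := ((PiLp.continuous_ofLp 1 _).comp continuous_subtype_val).subtype_mk _

/-- The independence complex of a forest is contractible or homotopy
equivalent to a sphere (the sphere `S^{k-1}` in `ℝ^k`; `k = 0` gives `S^{-1} = ∅`). -/
theorem statement9 {V : Type} [Fintype V] (G : SimpleGraph V) (hG : G.IsAcyclic) :
    ContractibleSpace G.indepComplex.space ∨
    ∃ k : ℕ, Nonempty (ContinuousMap.HomotopyEquiv G.indepComplex.space
      (Metric.sphere (0 : EuclideanSpace ℝ (Fin k)) 1)) := by
  rcases (G.contractibleOrSphere_indepRealization hG Finset.univ).of_homotopyEquiv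
    G.indepComplexSpaceHomeomorph.toHomotopyEquiv with h | ⟨k, ⟨e⟩⟩
  · exact Or.inl h
  · let toEuclidean := (PiLp.continuousLinearEquiv 1 ℝ fun _ : Fin k => ℝ).trans
      (PiLp.continuousLinearEquiv 2 ℝ fun _ : Fin k => ℝ).symm
    exact Or.inr ⟨k, ⟨e.trans toEuclidean.sphereHomeomorph.toHomotopyEquiv⟩⟩
end

section
/- Let P be a finite partially ordered set such that there exists a chain C of P intersecting every maximal chain of P. Then the order complex of P (whose simplices are the nonempty chains of P) is contractible. -/
attribute [local instance] Classical.propDecidable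

/-!
Call `x` dominated by `y ≠ x` in `A` if every element of `A` comparable with `x` is comparable
with `y`. Deleting a dominated vertex from the order complex is a strong collapse (`x ↦ y` is a
deformation retraction onto the rest), so it does not change the homotopy type.

Let `C` be an inclusion-minimal chain meeting every maximal chain of `A`. If `C = {c}`, then `c` is
comparable with everything and the order complex is a cone with apex `c`. Otherwise let `m` be
the top of `C`: by minimality some maximal chain `M₀` meets `C` only in `m`, and the largest
element of `M₀` below `m` lies outside `C` and is dominated by `m`. Deleting it keeps `C` a chain
meeting every maximal chain, so induction on `A` applies.
-/

namespace ASC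

section pushWeights

variable {V W X : Type} [Fintype V]

noncomputable def pushWeights (φ : V → W) (f : V → ℝ) (w : W) : ℝ :=
  ∑ v with φ v = w, f v

theorem sum_pushWeights [Fintype W] (φ : V → W) (f : V → ℝ) :
    ∑ w, pushWeights φ f w = ∑ v, f v :=
  Finset.sum_fiberwise _ φ f

theorem pushWeights_nonneg (φ : V → W) {f : V → ℝ} (hf : ∀ v, 0 ≤ f v) (w : W) :
    0 ≤ pushWeights φ f w :=
  Finset.sum_nonneg fun v _ => hf v

theorem mem_image_of_pushWeights_ne_zero {φ : V → W} {f : V → ℝ} {s : Finset V}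
    (hsupp : ∀ v, f v ≠ 0 → v ∈ s) {w : W} (hw : pushWeights φ f w ≠ 0) : w ∈ s.image φ := by
  by_contra hws
  refine hw (Finset.sum_eq_zero fun v hv => ?_)
  by_contra hfv
  exact hws (Finset.mem_image.mpr ⟨v, hsupp v hfv, (Finset.mem_filter.mp hv).2⟩)

theorem continuous_pushWeights (φ : V → W) : Continuous (pushWeights φ) :=
  continuous_pi fun _ => continuous_finsetSum _ fun v _ => continuous_apply v

theorem pushWeights_id (f : V → ℝ) : pushWeights id f = f := by
  funext v
  simp [pushWeights, Finset.sum_filter]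

theorem pushWeights_comp [Fintype W] (ψ : W → X) (φ : V → W) (f : V → ℝ) :
    pushWeights ψ (pushWeights φ f) = pushWeights (ψ ∘ φ) f := by
  funext x
  simp only [pushWeights]
  rw [← Finset.sum_fiberwise_of_maps_to (g := φ) (t := {w | ψ w = x})
    (fun v hv => by simpa using hv)]
  refine Finset.sum_congr rfl fun w hw => Finset.sum_congr ?_ fun _ _ => rfl
  ext v
  simp only [Finset.mem_filter, Finset.mem_univ, true_and, Function.comp_apply] at hw ⊢
  exact ⟨fun h => ⟨h ▸ hw, h⟩, And.right⟩

theorem pushWeights_const (w₀ : W) (f : V → ℝ) :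
    pushWeights (fun _ => w₀) f = Pi.single w₀ (∑ v, f v) := by
  funext w
  by_cases h : w = w₀
  · subst h
    simp [pushWeights]
  · simp [pushWeights, h, Ne.symm h]

end pushWeights

section simplicialMap

variable {V W X : Type} [Fintype V] [Fintype W] [Fintype X]

theorem pushWeights_mem_space {K : ASC V} {L : ASC W} {φ : V → W}
    (hφ : ∀ s ∈ K.faces, s.image φ ∈ L.faces) (f : K.space) :
    (∃ s ∈ L.faces, ∀ w, pushWeights φ f.1 w ≠ 0 → w ∈ s) ∧
      (∀ w, 0 ≤ pushWeights φ f.1 w) ∧ ∑ w, pushWeights φ f.1 w = 1 := by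
  obtain ⟨⟨s, hs, hsupp⟩, hnonneg, hsum⟩ := f.2
  exact ⟨⟨s.image φ, hφ s hs, fun _ => mem_image_of_pushWeights_ne_zero hsupp⟩,
    pushWeights_nonneg φ hnonneg, (sum_pushWeights φ f.1).trans hsum⟩

noncomputable def simplicialMap (K : ASC V) (L : ASC W) (φ : V → W)
    (hφ : ∀ s ∈ K.faces, s.image φ ∈ L.faces) : C(K.space, L.space) where
  toFun f := ⟨pushWeights φ f.1, pushWeights_mem_space hφ f⟩
  continuous_toFun :=
    ((continuous_pushWeights φ).comp continuous_subtype_val).subtype_mk _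

@[simp]
theorem coe_simplicialMap_apply (K : ASC V) (L : ASC W) (φ : V → W)
    (hφ : ∀ s ∈ K.faces, s.image φ ∈ L.faces) (f : K.space) :
    (simplicialMap K L φ hφ f).1 = pushWeights φ f.1 :=
  rfl

theorem simplicialMap_id (K : ASC V) :
    simplicialMap K K id (fun s hs => by rwa [Finset.image_id]) = ContinuousMap.id _ :=
  ContinuousMap.ext fun f => Subtype.ext (pushWeights_id f.1)

theorem simplicialMap_comp {K : ASC V} {L : ASC W} {M : ASC X} {φ : V → W} {ψ : W → X}
    (hφ : ∀ s ∈ K.faces, s.image φ ∈ L.faces) (hψ : ∀ s ∈ L.faces, s.image ψ ∈ M.faces) :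
    (simplicialMap L M ψ hψ).comp (simplicialMap K L φ hφ) =
      simplicialMap K M (ψ ∘ φ) (fun s hs => by rw [← Finset.image_image]; exact hψ _ (hφ s hs)) :=
  ContinuousMap.ext fun f => Subtype.ext (pushWeights_comp ψ φ f.1)

theorem simplicialMap_homotopic_of_contiguous {K : ASC V} {L : ASC W} {φ ψ : V → W}
    (hφ : ∀ s ∈ K.faces, s.image φ ∈ L.faces) (hψ : ∀ s ∈ K.faces, s.image ψ ∈ L.faces)
    (hcont : ∀ s ∈ K.faces, s.image φ ∪ s.image ψ ∈ L.faces) :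
    (simplicialMap K L φ hφ).Homotopic (simplicialMap K L ψ hψ) := by
  let H : unitInterval × K.space → W → ℝ := fun p w =>
    (1 - (p.1 : ℝ)) * pushWeights φ p.2.1 w + p.1 * pushWeights ψ p.2.1 w
  have hH : ∀ p, (∃ s ∈ L.faces, ∀ w, H p w ≠ 0 → w ∈ s) ∧ (∀ w, 0 ≤ H p w) ∧
      ∑ w, H p w = 1 := by
    rintro ⟨t, f⟩
    obtain ⟨⟨s, hs, hsupp⟩, hnonneg, hsum⟩ := f.2
    have ht : (0 : ℝ) ≤ 1 - t := sub_nonneg.mpr t.2.2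
    refine ⟨⟨_, hcont s hs, fun w hw => ?_⟩, fun w => ?_, ?_⟩
    · by_cases hφw : pushWeights φ f.1 w = 0
      · refine Finset.mem_union_right _ (mem_image_of_pushWeights_ne_zero hsupp fun h => hw ?_)
        simp [H, hφw, h]
      · exact Finset.mem_union_left _ (mem_image_of_pushWeights_ne_zero hsupp hφw)
    · exact add_nonneg (mul_nonneg ht (pushWeights_nonneg φ hnonneg w))
        (mul_nonneg t.2.1 (pushWeights_nonneg ψ hnonneg w))
    · simp only [H, Finset.sum_add_distrib, ← Finset.mul_sum, sum_pushWeights, hsum]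
      ring
  refine ⟨⟨⟨fun p => ⟨H p, hH p⟩, ?_⟩, fun f => ?_, fun f => ?_⟩⟩
  · refine Continuous.subtype_mk (continuous_pi fun w => ?_) _
    have hf := continuous_subtype_val.comp (continuous_snd (X := unitInterval) (Y := K.space))
    have ht := continuous_subtype_val.comp (continuous_fst (X := unitInterval) (Y := K.space))
    exact ((continuous_const.sub ht).mul ((continuous_apply w).comp
      ((continuous_pushWeights φ).comp hf))).add
      (ht.mul ((continuous_apply w).comp ((continuous_pushWeights ψ).comp hf)))
  · exact Subtype.ext (funext fun w => by simp [H])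
  · exact Subtype.ext (funext fun w => by simp [H])

theorem contractibleSpace_of_isCone (K : ASC V) {c : V} (hc : {c} ∈ K.faces)
    (hcone : ∀ s ∈ K.faces, insert c s ∈ K.faces) : ContractibleSpace K.space := by
  let p : K.space := ⟨Pi.single c 1, ⟨⟨{c}, hc, fun v hv => by
    by_contra h; exact hv (Pi.single_eq_of_ne (Finset.mem_singleton.not.mp h) 1)⟩,
    fun v => by by_cases h : v = c <;> simp [h], by simp⟩⟩
  have hconst : simplicialMap K K (fun _ => c) (fun s hs => by
      rw [Finset.image_const (K.nonempty_of_mem s hs)]; exact hc) = ContinuousMap.const _ p :=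
    ContinuousMap.ext fun f => Subtype.ext (by simp [pushWeights_const, f.2.2.2, p]; rfl)
  rw [contractible_iff_id_nullhomotopic, ← simplicialMap_id]
  exact ⟨p, hconst ▸ simplicialMap_homotopic_of_contiguous _ _ fun s hs => by
    rw [Finset.image_id, Finset.image_const (K.nonempty_of_mem s hs), Finset.union_singleton]
    exact hcone s hs⟩

end simplicialMap

section deleteVertex

variable {V : Type}

@[ext]
theorem ext {K L : ASC V} (h : K.faces = L.faces) : K = L := by
  cases K; cases L; cases h; rfl

def deleteVertex (K : ASC V) (x : V) : ASC V where
  faces := {s | s ∈ K.faces ∧ x ∉ s}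
  nonempty_of_mem s hs := K.nonempty_of_mem s hs.1
  down_closed s hs t hts htne := ⟨K.down_closed s hs.1 t hts htne, fun hx => hs.2 (hts hx)⟩

variable {K : ASC V} {x y : V}

theorem image_update_eq_self {s : Finset V} (hx : x ∉ s) :
    s.image (Function.update id x y) = s := by
  conv_rhs => rw [← Finset.image_id (s := s)]
  exact Finset.image_congr fun v hv => Function.update_of_ne (ne_of_mem_of_not_mem hv hx) _ _

theorem image_update_subset_insert (s : Finset V) :
    s.image (Function.update id x y) ⊆ insert y s := by
  intro w hw
  obtain ⟨v, hv, rfl⟩ := Finset.mem_image.mp hw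
  by_cases hvx : v = x
  · simp [hvx]
  · simp [Function.update_of_ne hvx, hv]

theorem union_image_update_mem (hdom : ∀ s ∈ K.faces, x ∈ s → insert y s ∈ K.faces)
    {s : Finset V} (hs : s ∈ K.faces) : s ∪ s.image (Function.update id x y) ∈ K.faces := by
  by_cases hx : x ∈ s
  · exact K.down_closed _ (hdom s hs hx) _
      (Finset.union_subset (Finset.subset_insert y s) (image_update_subset_insert s))
      ((K.nonempty_of_mem s hs).mono Finset.subset_union_left)
  · rwa [image_update_eq_self hx, Finset.union_self]

theorem image_update_mem_deleteVertex (hyx : y ≠ x)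
    (hdom : ∀ s ∈ K.faces, x ∈ s → insert y s ∈ K.faces) {s : Finset V} (hs : s ∈ K.faces) :
    s.image (Function.update id x y) ∈ (K.deleteVertex x).faces := by
  refine ⟨K.down_closed _ (union_image_update_mem hdom hs) _ Finset.subset_union_right
    ((K.nonempty_of_mem s hs).image _), fun hx => ?_⟩
  obtain ⟨v, -, hv⟩ := Finset.mem_image.mp hx
  by_cases hvx : v = x
  · exact hyx (by simpa [hvx] using hv)
  · exact hvx (by simpa [Function.update_of_ne hvx] using hv)

noncomputable def deleteVertexHomotopyEquiv [Fintype V] (hyx : y ≠ x)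
    (hdom : ∀ s ∈ K.faces, x ∈ s → insert y s ∈ K.faces) :
    ContinuousMap.HomotopyEquiv K.space (K.deleteVertex x).space where
  toFun := simplicialMap K _ _ fun _ => image_update_mem_deleteVertex hyx hdom
  invFun := simplicialMap (K.deleteVertex x) K id fun s hs => by rw [Finset.image_id]; exact hs.1
  left_inv := by
    rw [simplicialMap_comp, ← simplicialMap_id]
    exact simplicialMap_homotopic_of_contiguous _ _ fun s hs => by
      rw [Finset.image_id, Finset.union_comm]
      exact union_image_update_mem hdom hs
  right_inv := by
    rw [simplicialMap_comp, ← simplicialMap_id]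
    exact simplicialMap_homotopic_of_contiguous _ _ fun s hs => by
      rw [Function.comp_id, image_update_eq_self hs.2, Finset.image_id, Finset.union_self]
      exact hs

end deleteVertex

end ASC

section Poset

variable {P : Type} [PartialOrder P] {A C M : Set P}

def IsMaxChainIn (A M : Set P) : Prop :=
  Maximal (fun N => N ⊆ A ∧ IsChain (· ≤ ·) N) M

def IsTransversalChain (A C : Set P) : Prop :=
  C ⊆ A ∧ IsChain (· ≤ ·) C ∧ ∀ M, IsMaxChainIn A M → (C ∩ M).Nonempty

theorem isMaxChainIn_univ_iff : IsMaxChainIn Set.univ M ↔ IsMaxChain (· ≤ ·) M := by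
  simp only [IsMaxChainIn, IsMaxChain, Maximal, Set.subset_univ, true_and]
  exact and_congr_right fun _ => forall₂_congr fun t _ =>
    ⟨fun h hMt => hMt.antisymm (h hMt), fun h hMt => (h hMt).symm.subset⟩

theorem IsChain.exists_isGreatest {s : Set P} (hs : IsChain (· ≤ ·) s) (hfin : s.Finite)
    (hne : s.Nonempty) : ∃ m, IsGreatest s m := by
  obtain ⟨m, hm⟩ := hfin.exists_maximal hne
  exact ⟨m, hm.prop, hs.directedOn.is_top_of_is_max hm.prop fun a ha => hm.le_of_ge ha⟩

theorem IsMaxChainIn.mem_of_forall_le_or_ge (hM : IsMaxChainIn A M) {a : P} (ha : a ∈ A)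
    (hcomp : ∀ b ∈ M, a ≤ b ∨ b ≤ a) : a ∈ M :=
  hM.mem_of_prop_insert ⟨Set.insert_subset ha hM.prop.1,
    hM.prop.2.insert fun b hb _ => hcomp b hb⟩

theorem exists_isMaxChainIn_superset [Finite P] {s : Set P} (hsA : s ⊆ A)
    (hs : IsChain (· ≤ ·) s) : ∃ M, IsMaxChainIn A M ∧ s ⊆ M := by
  obtain ⟨M, hsM, hM⟩ :=
    Finite.exists_le_maximal (p := fun N => N ⊆ A ∧ IsChain (· ≤ ·) N) ⟨hsA, hs⟩
  exact ⟨M, hM, hsM⟩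

namespace IsTransversalChain

variable [Finite P]

theorem nonempty (hC : IsTransversalChain A C) : C.Nonempty := by
  obtain ⟨M, hM, -⟩ := exists_isMaxChainIn_superset (Set.empty_subset A) IsChain.empty
  exact (hC.2.2 M hM).mono Set.inter_subset_left

theorem diff_singleton (hC : IsTransversalChain A C) {x : P} (hx : x ∉ C) :
    IsTransversalChain (A \ {x}) C := by
  refine ⟨fun c hc => ⟨hC.1 hc, fun hcx => hx (hcx ▸ hc)⟩, hC.2.1, fun M hM => ?_⟩
  obtain ⟨M₂, hM₂, hMM₂⟩ :=
    exists_isMaxChainIn_superset (hM.prop.1.trans Set.sdiff_subset) hM.prop.2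
  obtain ⟨c, hcC, hcM₂⟩ := hC.2.2 M₂ hM₂
  have hM₂M : M₂ \ {x} ⊆ M :=
    hM.le_of_ge ⟨Set.sdiff_subset_sdiff_left hM₂.prop.1, hM₂.prop.2.mono Set.sdiff_subset⟩
      (Set.subset_sdiff_singleton hMM₂ fun hxM => (hM.prop.1 hxM).2 rfl)
  exact ⟨c, hcC, hM₂M ⟨hcM₂, fun hcx => hx (hcx ▸ hcC)⟩⟩

theorem le_or_ge_of_singleton {c : P} (hc : IsTransversalChain A {c}) {b : P} (hb : b ∈ A) :
    b ≤ c ∨ c ≤ b := by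
  obtain ⟨M, hM, hbM⟩ :=
    exists_isMaxChainIn_superset (Set.singleton_subset_iff.mpr hb) IsChain.singleton
  obtain ⟨c', rfl, hcM⟩ := hc.2.2 M hM
  exact hM.prop.2.total (hbM rfl) hcM

theorem le_or_ge_of_forall_lt_le (hC : IsTransversalChain A C) {m : P} (hm : IsGreatest C m)
    {M₀ : Set P} (hM₀ : IsMaxChainIn A M₀) (hmM₀ : m ∈ M₀) (hCM₀ : ∀ c ∈ C, c ∈ M₀ → c = m)
    {z : P} (hzA : z ∈ A) (hz : ∀ w ∈ M₀, w < m → w ≤ z) : z ≤ m ∨ m ≤ z := by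
  by_contra! hzm
  -- extend `{w ∈ M₀ | w < m} ∪ {z}` to a maximal chain `M₁`; the point where `M₁` meets `C` is
  -- not `m`, yet it is comparable with all of `M₀`, so it lies in `M₀`
  let D := {w ∈ M₀ | w < m}
  obtain ⟨M₁, hM₁, hzDM₁⟩ := exists_isMaxChainIn_superset (s := insert z D)
    (Set.insert_subset hzA fun w hw => hM₀.prop.1 hw.1)
    ((hM₀.prop.2.mono fun w hw => hw.1).insert fun w hw _ => Or.inr (hz w hw.1 hw.2))
  obtain ⟨c, hcC, hcM₁⟩ := hC.2.2 M₁ hM₁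
  have hcm : c ≠ m := by
    rintro rfl
    rcases hM₁.prop.2.total hcM₁ (hzDM₁ (Set.mem_insert z D)) with h | h
    · exact hzm.2 h
    · exact hzm.1 h
  refine hcm (hCM₀ c hcC (hM₀.mem_of_forall_le_or_ge (hC.1 hcC) fun w hw => ?_))
  rcases hM₀.prop.2.total hw hmM₀ with hwm | hmw
  · rcases hwm.lt_or_eq with hwm | rfl
    · exact hM₁.prop.2.total hcM₁ (hzDM₁ (Set.mem_insert_of_mem z ⟨hw, hwm⟩))
    · exact Or.inl (hm.2 hcC)
  · exact Or.inl ((hm.2 hcC).trans hmw)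

theorem exists_dominated_of_minimal (hC : Minimal (IsTransversalChain A) C)
    (hCnt : C.Nontrivial) :
    ∃ x ∈ A, x ∉ C ∧ ∃ y ∈ A, y ≠ x ∧ ∀ z ∈ A, (z ≤ x ∨ x ≤ z) → z ≤ y ∨ y ≤ z := by
  obtain ⟨m, hm⟩ := hC.prop.2.1.exists_isGreatest (Set.toFinite C) hCnt.nonempty
  have hnot : ¬ IsTransversalChain A (C \ {m}) :=
    hC.not_prop_of_lt (Set.sdiff_singleton_ssubset.mpr hm.1)
  obtain ⟨M₀, hM₀, hCM₀⟩ : ∃ M₀, IsMaxChainIn A M₀ ∧ ∀ c ∈ C, c ∈ M₀ → c = m := by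
    by_contra! h
    refine hnot ⟨Set.sdiff_subset.trans hC.prop.1, hC.prop.2.1.mono Set.sdiff_subset,
      fun M hM => ?_⟩
    obtain ⟨c, hcC, hcM, hcm⟩ := h M hM
    exact ⟨c, ⟨hcC, hcm⟩, hcM⟩
  have hmM₀ : m ∈ M₀ := by
    obtain ⟨c, hcC, hcM₀⟩ := hC.prop.2.2 M₀ hM₀
    exact hCM₀ c hcC hcM₀ ▸ hcM₀
  let D := {w ∈ M₀ | w < m}
  -- otherwise `m` is the bottom of `M₀`, and any other element of `C` would extend `M₀`
  have hD : D.Nonempty := by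
    obtain ⟨c, hcC, hcm⟩ := hCnt.exists_ne m
    by_contra! hD
    refine hcm (hCM₀ c hcC (hM₀.mem_of_forall_le_or_ge (hC.prop.1 hcC) fun w hw => ?_))
    rcases hM₀.prop.2.total hw hmM₀ with hwm | hmw
    · have hwm' : w = m := hwm.eq_of_not_lt fun h => (hD.subset ⟨hw, h⟩ : w ∈ (∅ : Set P))
      exact Or.inl (hwm' ▸ hm.2 hcC)
    · exact Or.inl ((hm.2 hcC).trans hmw)
  obtain ⟨x, ⟨hxM₀, hxm⟩, hx⟩ :=
    (hM₀.prop.2.mono fun w hw => hw.1).exists_isGreatest (Set.toFinite D) hD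
  refine ⟨x, hM₀.prop.1 hxM₀, fun hxC => hxm.ne (hCM₀ x hxC hxM₀), m, hC.prop.1 hm.1, hxm.ne',
    fun z hzA => ?_⟩
  rintro (hzx | hxz)
  · exact Or.inl (hzx.trans hxm.le)
  · exact hC.prop.le_or_ge_of_forall_lt_le hm hM₀ hmM₀ hCM₀ hzA
      fun w hw hwm => (hx ⟨hw, hwm⟩).trans hxz

end IsTransversalChain

def orderComplexOn (A : Set P) : ASC P where
  faces := {s | s.Nonempty ∧ ↑s ⊆ A ∧ IsChain (· ≤ ·) (↑s : Set P)}
  nonempty_of_mem _ hs := hs.1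
  down_closed _ hs _ hts htne :=
    ⟨htne, (Finset.coe_subset.mpr hts).trans hs.2.1, hs.2.2.mono (Finset.coe_subset.mpr hts)⟩

theorem orderComplexOn_deleteVertex (A : Set P) (x : P) :
    (orderComplexOn A).deleteVertex x = orderComplexOn (A \ {x}) := by
  ext s
  constructor
  · rintro ⟨⟨hne, hsA, hs⟩, hxs⟩
    exact ⟨hne, Set.subset_sdiff_singleton hsA hxs, hs⟩
  · rintro ⟨hne, hsA, hs⟩
    exact ⟨⟨hne, hsA.trans Set.sdiff_subset, hs⟩, fun hxs => (hsA hxs).2 rfl⟩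

theorem insert_mem_orderComplexOn {s : Finset P} (hs : s ∈ (orderComplexOn A).faces) {y : P}
    (hy : y ∈ A) (hcomp : ∀ b ∈ s, b ≤ y ∨ y ≤ b) : insert y s ∈ (orderComplexOn A).faces := by
  refine ⟨Finset.insert_nonempty y s, ?_, ?_⟩ <;> rw [Finset.coe_insert]
  · exact Set.insert_subset hy hs.2.1
  · exact hs.2.2.insert fun b hb _ => (hcomp b hb).symm

theorem contractibleSpace_orderComplexOn [Fintype P] (A : Set P)
    (hA : ∃ C, IsTransversalChain A C) : ContractibleSpace (orderComplexOn A).space := by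
  induction A using WellFoundedLT.induction with | _ A ih => ?_
  obtain ⟨C₀, hC₀⟩ := hA
  obtain ⟨C, -, hC⟩ := Finite.exists_le_minimal hC₀
  rcases hC.prop.nonempty.exists_eq_singleton_or_nontrivial with ⟨c, rfl⟩ | hCnt
  · have hcA : c ∈ A := hC.prop.1 rfl
    exact (orderComplexOn A).contractibleSpace_of_isCone
      ⟨Finset.singleton_nonempty c, by simpa using hcA, by simp⟩ fun s hs =>
        insert_mem_orderComplexOn hs hcA fun b hb => hC.prop.le_or_ge_of_singleton (hs.2.1 hb)
  · obtain ⟨x, hxA, hxC, y, hyA, hyx, hdom⟩ :=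
      IsTransversalChain.exists_dominated_of_minimal hC hCnt
    have := ih (A \ {x}) (Set.sdiff_singleton_ssubset.mpr hxA) ⟨C, hC.prop.diff_singleton hxC⟩
    rw [← orderComplexOn_deleteVertex] at this
    exact (ASC.deleteVertexHomotopyEquiv hyx fun s hs hxs => insert_mem_orderComplexOn hs hyA
      fun b hb => hdom b (hs.2.1 hb) (hs.2.2.total hb hxs)).contractibleSpace

end Poset

/-- If a finite poset has a chain meeting every maximal chain, then its
order complex is contractible. -/
theorem statement14 {P : Type} [Fintype P] [PartialOrder P]
    (C : Set P) (hC : IsChain (· ≤ ·) C)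
    (hmeet : ∀ M : Set P, IsMaxChain (· ≤ ·) M → (C ∩ M).Nonempty) :
    ContractibleSpace (ASC.space
      { faces := {s : Finset P | s.Nonempty ∧ IsChain (· ≤ ·) (↑s : Set P)}
        nonempty_of_mem := fun s hs => hs.1
        down_closed := fun s hs t hts htne =>
          ⟨htne, hs.2.mono (Finset.coe_subset.mpr hts)⟩ }) := by
  convert contractibleSpace_orderComplexOn Set.univ
    ⟨C, Set.subset_univ C, hC, fun M hM => hmeet M (isMaxChainIn_univ_iff.mp hM)⟩ using 2 <;>
  · ext s
    simp [orderComplexOn]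
end

section
/- Let G be a finite graph and σ a nonempty independent set of vertices such that every independent set τ of G with at most r vertices can be extended by some vertex of σ (i.e., there is v ∈ σ with τ ∪ {v} independent). Then the independence complex I_G is (r−1)-connected. -/
attribute [local instance] Classical.propDecidable

/-!
Let `γ` be a `k`-loop in `I_G` with `k < r`. Reparametrize `γ` to be the base point on a collar of
the cube, and sample it on a fine Kuhn grid, labelling each grid point by a vertex of large weight
in the value of `γ` there. Since `γ` barely moves between neighbouring grid points, these labels lie
in the support of `γ` nearby, and the simplicial map `g` they define takes values in faces with at
most `k + 1 ≤ r` vertices. Sampling `g` in the same way gives `g'`, and labelling instead by a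
vertex of `σ` extending the face carrying `g` gives a map `h` into the simplex `σ`. As `I_G` is a
flag complex and all these labels are pairwise independent, `g'` and `h` are pointwise in a common
face, so straight-line homotopies lead from `γ` through `g'` to `h`, and from there to a constant;
on the collar everything is blended into the base point.
-/

noncomputable section

open Finset Topology.Homotopy

lemma Finset.continuous_fold_max {ι α : Type*} [TopologicalSpace α] (s : Finset ι) (b : ℝ)
    {F : ι → α → ℝ} (hF : ∀ i, Continuous (F i)) : Continuous fun a => s.fold max b (F · a) := by
  classical
  induction s using Finset.induction_on with
  | empty => exact continuous_const
  | insert i s hi ih => simpa only [fold_insert hi] using (hF i).max ih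

theorem ContinuousMap.homotopicRel_comp_const {X Y : Type*} [TopologicalSpace X]
    [TopologicalSpace Y] (Φ : C(ℝ, Y)) (m : C(X, ℝ)) {S : Set X} (hm : ∀ x ∈ S, m x = 0) :
    (Φ.comp m).HomotopicRel (.const X (Φ 0)) S :=
  ⟨{ toFun := fun q => Φ ((1 - (q.1 : ℝ)) * m q.2)
     continuous_toFun := by fun_prop
     map_zero_left := fun _ => by simp
     map_one_left := fun _ => by simp
     prop' := fun t x hx => by simp [hm x hx] }⟩

namespace ASC

variable {V : Type} {K : ASC V}

lemma pair_mem_faces_s16 {s : Finset V} (hs : s ∈ K.faces) {a b : V}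
    (ha : a ∈ s) (hb : b ∈ s) : {a, b} ∈ K.faces :=
  K.down_closed s hs _ (insert_subset ha (singleton_subset_iff.2 hb)) (insert_nonempty _ _)

lemma singleton_mem_faces {s : Finset V} (hs : s ∈ K.faces) {v : V} (hv : v ∈ s) :
    {v} ∈ K.faces :=
  K.down_closed s hs _ (singleton_subset_iff.2 hv) (singleton_nonempty v)

lemma IsClique.image_union_image_mem_faces (hK : K.IsClique) {σ : Finset V} (hσ : σ ∈ K.faces)
    {ι : Type*} {P : Finset ι} (hP : P.Nonempty) {heavy star : ι → V} {S : ι → Finset V}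
    (hheavy : ∀ p ∈ P, ∀ q ∈ P, heavy p ∈ S q)
    (hstar : ∀ p ∈ P, star p ∈ σ ∧ insert (star p) (S p) ∈ K.faces) :
    P.image heavy ∪ P.image star ∈ K.faces := by
  have hmixed : ∀ p ∈ P, ∀ q ∈ P, ({heavy p, star q} : Finset V) ∈ K.faces := fun p hp q hq =>
    pair_mem_faces_s16 (hstar q hq).2 (mem_insert_of_mem (hheavy p hp q hq)) (mem_insert_self _ _)
  refine hK _ (hP.image _ |>.mono subset_union_left) fun a ha b hb => ?_
  simp only [mem_union, mem_image] at ha hb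
  rcases ha with ⟨p, hp, rfl⟩ | ⟨p, hp, rfl⟩ <;> rcases hb with ⟨q, hq, rfl⟩ | ⟨q, hq, rfl⟩
  · exact pair_mem_faces_s16 (hstar p hp).2 (mem_insert_of_mem (hheavy p hp p hp))
      (mem_insert_of_mem (hheavy q hq p hp))
  · exact hmixed p hp q hq
  · exact pair_comm (heavy q) (star p) ▸ hmixed q hq p hp
  · exact pair_mem_faces_s16 hσ (hstar p hp).1 (hstar q hq).1

end ASC

section

open scoped unitInterval

namespace ASC

variable {V : Type} [Fintype V] {K : ASC V} {X : Type*} [TopologicalSpace X]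

def supp (x : V → ℝ) : Finset V := univ.filter fun v => x v ≠ 0

@[simp] lemma mem_supp {x : V → ℝ} {v : V} : v ∈ supp x ↔ x v ≠ 0 := by simp [supp]

lemma supp_nonempty {x : V → ℝ} (hx : x ∈ stdSimplex ℝ V) : (supp x).Nonempty := by
  by_contra h
  have hzero : ∀ v, x v = 0 := fun v => by
    by_contra hv
    exact h ⟨v, mem_supp.2 hv⟩
  simpa [hzero] using hx.2

lemma supp_mem_faces_of_subset {x : V → ℝ} (hx : x ∈ stdSimplex ℝ V) {s : Finset V}
    (hs : s ∈ K.faces) (h : supp x ⊆ s) : supp x ∈ K.faces :=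
  K.down_closed s hs _ h (supp_nonempty hx)

lemma supp_mem_faces (x : K.space) : supp x.1 ∈ K.faces := by
  obtain ⟨⟨s, hs, hsub⟩, hx⟩ := x.2
  exact supp_mem_faces_of_subset hx hs fun v hv => hsub v (mem_supp.1 hv)

def vertex {v : V} (hv : {v} ∈ K.faces) : K.space :=
  ⟨Pi.single v 1, ⟨{v}, hv, fun w hw => by by_contra h; simp_all⟩, single_mem_stdSimplex ℝ v⟩

lemma supp_single (v : V) : supp (Pi.single v (1 : ℝ)) = {v} := by
  ext w; by_cases h : w = v <;> simp [h]

lemma eq_single_of_supp_subset {x : V → ℝ} (hx : x ∈ stdSimplex ℝ V)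
    {u : V} (h : supp x ⊆ {u}) : x = Pi.single u 1 := by
  have hzero : ∀ v, v ≠ u → x v = 0 := fun v hv => by
    by_contra hxv
    exact hv (mem_singleton.1 (h (mem_supp.2 hxv)))
  funext v
  by_cases hv : v = u
  · subst hv
    rw [Pi.single_eq_same, ← hx.2, sum_eq_single v (fun w _ hw => hzero w hw) (by simp)]
  · rw [hzero v hv, Pi.single_eq_of_ne hv]

@[simp] lemma supp_vertex {v : V} (hv : {v} ∈ K.faces) : supp (vertex hv).1 = {v} :=
  supp_single v

def mkMap (F : X → V → ℝ) (hF : Continuous F) (hsimplex : ∀ x, F x ∈ stdSimplex ℝ V)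
    (hface : ∀ x, supp (F x) ∈ K.faces) : C(X, K.space) :=
  ⟨fun x => ⟨F x, ⟨supp (F x), hface x, fun _ hv => mem_supp.2 hv⟩, hsimplex x⟩, hF.subtype_mk _⟩

lemma supp_add_smul_subset (a b : V → ℝ) (s t : ℝ) : supp (s • a + t • b) ⊆ supp a ∪ supp b := by
  intro v hv
  by_contra h
  simp_all

def mix (t : C(X, I)) (a b : C(X, K.space))
    (h : ∀ x, t x ≠ 0 → supp (a x).1 ∪ supp (b x).1 ∈ K.faces) : C(X, K.space) :=
  have hmem : ∀ x, (1 - (t x : ℝ)) • (a x).1 + (t x : ℝ) • (b x).1 ∈ stdSimplex ℝ V := fun x =>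
    convex_stdSimplex ℝ V (a x).2.2 (b x).2.2 (by linarith [(t x).2.2]) (t x).2.1 (by ring)
  mkMap _ (by fun_prop) hmem fun x => by
    by_cases ht : t x = 0
    · simpa [ht] using supp_mem_faces (a x)
    · exact supp_mem_faces_of_subset (hmem x) (h x ht) (supp_add_smul_subset _ _ _ _)

@[simp] lemma mix_apply_coe (t : C(X, I)) (a b : C(X, K.space)) (h) (x : X) :
    (mix t a b h x).1 = (1 - (t x : ℝ)) • (a x).1 + (t x : ℝ) • (b x).1 := rfl

lemma mix_apply_of_eq_zero {t : C(X, I)} {a b : C(X, K.space)} {h} {x : X} (ht : t x = 0) :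
    mix t a b h x = a x :=
  Subtype.ext (by simp [ht])

lemma mix_apply_of_eq_one {t : C(X, I)} {a b : C(X, K.space)} {h} {x : X} (ht : t x = 1) :
    mix t a b h x = b x :=
  Subtype.ext (by simp [ht])

lemma supp_mix_subset (t : C(X, I)) (a b : C(X, K.space)) (h) (x : X) :
    supp (mix t a b h x).1 ⊆ supp (a x).1 ∪ supp (b x).1 :=
  supp_add_smul_subset _ _ _ _

theorem homotopicRel_of_supp_union_mem_faces {f g : C(X, K.space)} {S : Set X}
    (hfg : ∀ x, supp (f x).1 ∪ supp (g x).1 ∈ K.faces) (hS : ∀ x ∈ S, f x = g x) :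
    f.HomotopicRel g S :=
  ⟨{ toContinuousMap := mix .fst (f.comp .snd) (g.comp .snd) fun x _ => hfg x.2
     map_zero_left := fun _ => mix_apply_of_eq_zero rfl
     map_one_left := fun _ => mix_apply_of_eq_one rfl
     prop' := fun t x hx => Subtype.ext <| by
       change (1 - (t : ℝ)) • (f x).1 + (t : ℝ) • (g x).1 = (f x).1
       rw [hS x hx]
       module }⟩

end ASC

namespace Cube

variable {k : ℕ}

-- The cap `1 / 2` keeps `depth` away from `0` on `I^0`, whose boundary is empty.
def depth (z : Fin k → I) : ℝ := univ.fold min (1 / 2) fun i => min (z i : ℝ) (1 - z i)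

lemma depth_eq_zero_of_mem_boundary {z : Fin k → I} (hz : z ∈ boundary (Fin k)) : depth z = 0 := by
  obtain ⟨i, hi⟩ := hz
  refine le_antisymm ((fold_min_le _).2 (Or.inr ⟨i, mem_univ i, ?_⟩))
    ((le_fold_min _).2 ⟨by norm_num, fun j _ => le_min (z j).2.1 (by linarith [(z j).2.2])⟩)
  rcases hi with hi | hi <;> simp [hi]

lemma exists_near_boundary_of_depth_le {z : Fin k → I} {c : ℝ} (h : depth z ≤ c)
    (hc : c < 1 / 2) : ∃ i, (z i : ℝ) ≤ c ∨ 1 - (z i : ℝ) ≤ c := by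
  by_contra! hcon
  exact h.not_gt ((lt_fold_min _).2 ⟨hc, fun i _ => lt_min (hcon i).1 (hcon i).2⟩)

lemma depth_le_depth_add_dist (z z' : Fin k → I) : depth z ≤ depth z' + dist z z' := by
  rcases (fold_min_le _).1 (le_refl (depth z')) with h | ⟨i, -, hi⟩
  · exact ((fold_min_le _).2 (Or.inl le_rfl)).trans (by linarith [dist_nonneg (x := z) (y := z')])
  · have hzi : |(z i : ℝ) - z' i| ≤ dist z z' := by
      rw [← Real.dist_eq, ← Subtype.dist_eq]
      exact dist_le_pi_dist z z' i
    have hfold : depth z ≤ min (z i : ℝ) (1 - z i) :=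
      (fold_min_le _).2 (Or.inr ⟨i, mem_univ i, le_rfl⟩)
    rcases abs_le.1 hzi with ⟨h1, h2⟩
    rcases min_le_iff.1 hi with h | h
    · linarith [min_le_left (z i : ℝ) (1 - z i)]
    · linarith [min_le_right (z i : ℝ) (1 - z i)]

lemma depth_le_add_of_dist_le {z z' : Fin k → I} {a b : ℝ} (hz : depth z ≤ a)
    (hzz' : dist z z' ≤ b) : depth z' ≤ a + b := by
  linarith [depth_le_depth_add_dist z' z, dist_comm z z']

lemma continuous_depth : Continuous (depth (k := k)) :=
  (LipschitzWith.of_le_add depth_le_depth_add_dist).continuous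

/-- Pushes the collar `{depth ≤ c}` onto the boundary at time `1`, coordinatewise by the affine
map sending `[t c, 1 - t c]` onto `[0, 1]`. -/
def stretch (c : ℝ) (q : I × (Fin k → I)) : Fin k → I := fun i =>
  Set.projIcc 0 1 zero_le_one (((q.2 i : ℝ) - q.1 * c) / (1 - 2 * q.1 * c))

variable {c : ℝ}

lemma stretch_denom_pos (hc0 : 0 ≤ c) (hc : c < 1 / 2) (t : I) : 0 < 1 - 2 * (t : ℝ) * c := by
  nlinarith [t.2.1, t.2.2]

lemma continuous_stretch (hc0 : 0 ≤ c) (hc : c < 1 / 2) : Continuous (stretch (k := k) c) :=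
  continuous_pi fun _ => continuous_projIcc.comp <| Continuous.div (by fun_prop) (by fun_prop)
    fun q => (stretch_denom_pos hc0 hc q.1).ne'

lemma stretch_zero (z : Fin k → I) : stretch c (0, z) = z := by
  funext i
  simp [stretch, Set.projIcc_of_mem _ (z i).2]

lemma stretch_mem_boundary_of_exists {t : I} {z : Fin k → I} (hc0 : 0 ≤ c) (hc : c < 1 / 2)
    (h : ∃ i, (z i : ℝ) ≤ t * c ∨ 1 - t * c ≤ z i) : stretch c (t, z) ∈ boundary (Fin k) := by
  obtain ⟨i, hi⟩ := h
  have hd := stretch_denom_pos hc0 hc t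
  refine ⟨i, hi.imp (fun h => ?_) (fun h => ?_)⟩
  · refine (Set.projIcc_of_le_left zero_le_one ?_).trans rfl
    exact div_nonpos_of_nonpos_of_nonneg (by linarith) hd.le
  · refine (Set.projIcc_of_right_le zero_le_one ?_).trans rfl
    rw [le_div_iff₀ hd]
    linarith

lemma stretch_mem_boundary (hc0 : 0 ≤ c) (hc : c < 1 / 2) (t : I) {z : Fin k → I}
    (hz : z ∈ boundary (Fin k)) : stretch c (t, z) ∈ boundary (Fin k) := by
  obtain ⟨i, hi⟩ := hz
  have := mul_nonneg t.2.1 hc0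
  exact stretch_mem_boundary_of_exists hc0 hc
    ⟨i, hi.imp (fun h => by simp [h, this]) (fun h => by simp [h, this])⟩

lemma stretch_one_mem_boundary (hc0 : 0 ≤ c) (hc : c < 1 / 2) {z : Fin k → I}
    (hz : depth z ≤ c) : stretch c (1, z) ∈ boundary (Fin k) := by
  obtain ⟨i, hi⟩ := exists_near_boundary_of_depth_le hz hc
  exact stretch_mem_boundary_of_exists hc0 hc
    ⟨i, hi.imp (by simpa using ·) fun h => by simp; linarith⟩

end Cube

theorem GenLoop.exists_homotopicRel_eq_on_collar {X : Type*} [TopologicalSpace X] {x : X} {k : ℕ}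
    (γ : Ω^ (Fin k) X x) {c : ℝ} (hc0 : 0 ≤ c) (hc : c < 1 / 2) :
    ∃ f : C(Fin k → I, X), (γ : C(Fin k → I, X)).HomotopicRel f (Cube.boundary (Fin k)) ∧
      ∀ z, Cube.depth z ≤ c → f z = x := by
  have hs := Cube.continuous_stretch (k := k) hc0 hc
  refine ⟨⟨fun z => γ (Cube.stretch c (1, z)), by fun_prop⟩, ⟨?_⟩, fun z hz =>
    GenLoop.boundary γ _ (Cube.stretch_one_mem_boundary hc0 hc hz)⟩
  exact
    { toFun := fun q => γ (Cube.stretch c q)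
      map_zero_left := fun z => by simp [Cube.stretch_zero]
      map_one_left := fun _ => rfl
      prop' := fun t z hz => by
        simp [GenLoop.boundary γ _ (Cube.stretch_mem_boundary hc0 hc t hz),
          GenLoop.boundary γ _ hz] }

namespace Cube

variable {k : ℕ}

/-- Hat functions of Kuhn's triangulation of `ℝ^k`: `kuhnHat (· - p)` is the piecewise linear
function that is `1` at the lattice point `p` and vanishes at all other lattice points. -/
def kuhnHat (u : Fin k → ℝ) : ℝ := max 0 (1 - univ.fold max 0 u - univ.fold max 0 (-u))

lemma kuhnHat_nonneg (u : Fin k → ℝ) : 0 ≤ kuhnHat u := le_max_left _ _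

lemma continuous_kuhnHat : Continuous (kuhnHat (k := k)) :=
  continuous_const.max <| (continuous_const.sub <| continuous_fold_max _ _ continuous_apply).sub <|
    continuous_fold_max _ _ fun i => (continuous_apply i).neg

lemma kuhnHat_pos {u : Fin k → ℝ} (h0 : ∀ i, 0 ≤ u i) (h1 : ∀ i, u i < 1) : 0 < kuhnHat u := by
  have hneg : univ.fold max 0 (-u) = 0 :=
    le_antisymm ((fold_max_le _).2 ⟨le_rfl, fun i _ => neg_nonpos.2 (h0 i)⟩)
      ((le_fold_max _).2 (Or.inl le_rfl))
  have hpos : univ.fold max 0 u < 1 := (fold_max_lt _).2 ⟨one_pos, fun i _ => h1 i⟩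
  exact lt_max_of_lt_right (by linarith)

lemma kuhnHat_ne_zero_iff {u : Fin k → ℝ} :
    kuhnHat u ≠ 0 ↔ univ.fold max 0 u + univ.fold max 0 (-u) < 1 := by
  rw [kuhnHat, ne_eq, max_eq_left_iff, not_le]
  constructor <;> intro h <;> linarith

lemma abs_lt_one_of_kuhnHat_ne_zero {u : Fin k → ℝ} (h : kuhnHat u ≠ 0) (i : Fin k) :
    |u i| < 1 := by
  have h := kuhnHat_ne_zero_iff.1 h
  have h1 : u i ≤ univ.fold max 0 u := (le_fold_max _).2 (Or.inr ⟨i, mem_univ i, le_rfl⟩)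
  have h2 : -u i ≤ univ.fold max 0 (-u) := (le_fold_max _).2 (Or.inr ⟨i, mem_univ i, le_rfl⟩)
  have h3 : 0 ≤ univ.fold max 0 u := (le_fold_max _).2 (Or.inl le_rfl)
  have h4 : 0 ≤ univ.fold max 0 (-u) := (le_fold_max _).2 (Or.inl le_rfl)
  exact abs_lt.2 ⟨by linarith, by linarith⟩

lemma sub_lt_one_of_kuhnHat_ne_zero {u : Fin k → ℝ} (h : kuhnHat u ≠ 0) (i j : Fin k) :
    u j - u i < 1 := by
  have h := kuhnHat_ne_zero_iff.1 h
  have h1 : u j ≤ univ.fold max 0 u := (le_fold_max _).2 (Or.inr ⟨j, mem_univ j, le_rfl⟩)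
  have h2 : -u i ≤ univ.fold max 0 (-u) := (le_fold_max _).2 (Or.inr ⟨i, mem_univ i, le_rfl⟩)
  linarith

variable {N : ℕ}

def gridPt (N : ℕ) (p : Fin k → Fin (N + 1)) : Fin k → I := fun i =>
  ⟨(p i : ℝ) / N, by positivity, div_le_one_of_le₀ (by exact_mod_cast (p i).is_le) (by positivity)⟩

def gridHat (N : ℕ) (z : Fin k → I) (p : Fin k → Fin (N + 1)) : ℝ :=
  kuhnHat fun i => N * (z i : ℝ) - (p i : ℕ)

def activePts (N : ℕ) (z : Fin k → I) : Finset (Fin k → Fin (N + 1)) :=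
  univ.filter fun p => gridHat N z p ≠ 0

lemma abs_sub_lt_one_of_mem_activePts {z : Fin k → I} {p : Fin k → Fin (N + 1)}
    (hp : p ∈ activePts N z) (i : Fin k) : |N * (z i : ℝ) - (p i : ℕ)| < 1 :=
  abs_lt_one_of_kuhnHat_ne_zero (mem_filter.1 hp).2 i

lemma dist_gridPt_le (hN : 0 < N) {z : Fin k → I} {p : Fin k → Fin (N + 1)}
    (hp : p ∈ activePts N z) : dist z (gridPt N p) ≤ (N : ℝ)⁻¹ := by
  have hN' : (0 : ℝ) < N := by exact_mod_cast hN
  refine (dist_pi_le_iff (by positivity)).2 fun i => ?_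
  rw [Subtype.dist_eq, Real.dist_eq, gridPt]
  have h := abs_sub_lt_one_of_mem_activePts hp i
  calc |(z i : ℝ) - (p i : ℕ) / N| = |N * (z i : ℝ) - (p i : ℕ)| / N := by
        rw [eq_div_iff hN'.ne', ← abs_of_pos hN', ← abs_mul, abs_of_pos hN']
        congr 1
        field_simp
    _ ≤ (N : ℝ)⁻¹ := by rw [inv_eq_one_div]; gcongr

def floorPt (N : ℕ) (z : Fin k → I) : Fin k → Fin (N + 1) := fun i =>
  ⟨⌊N * (z i : ℝ)⌋₊, Nat.lt_succ_of_le <| Nat.floor_le_of_le <|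
    mul_le_of_le_one_right (Nat.cast_nonneg N) (z i).2.2⟩

lemma floorPt_mem_activePts (N : ℕ) (z : Fin k → I) : floorPt N z ∈ activePts N z := by
  refine mem_filter.2 ⟨mem_univ _, (kuhnHat_pos (fun i => ?_) (fun i => ?_)).ne'⟩
  · exact sub_nonneg.2 (Nat.floor_le (mul_nonneg N.cast_nonneg (z i).2.1))
  · dsimp only [floorPt]
    linarith [Nat.lt_floor_add_one (N * (z i : ℝ))]

lemma floor_le_and_le_floor_add_one_of_mem_activePts {z : Fin k → I}
    {p : Fin k → Fin (N + 1)} (hp : p ∈ activePts N z) (i : Fin k) :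
    ⌊N * (z i : ℝ)⌋₊ ≤ p i ∧ (p i : ℕ) ≤ ⌊N * (z i : ℝ)⌋₊ + 1 := by
  obtain ⟨h1, h2⟩ := abs_lt.1 (abs_sub_lt_one_of_mem_activePts hp i)
  have h3 := Nat.floor_le (mul_nonneg N.cast_nonneg (z i).2.1)
  have h4 := Nat.lt_floor_add_one (N * (z i : ℝ))
  constructor
  · have : (⌊N * (z i : ℝ)⌋₊ : ℝ) < (p i : ℕ) + 1 := by linarith
    exact_mod_cast Nat.lt_succ_iff.1 (by exact_mod_cast this)
  · have : ((p i : ℕ) : ℝ) < ⌊N * (z i : ℝ)⌋₊ + 2 := by linarith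
    have : (p i : ℕ) < ⌊N * (z i : ℝ)⌋₊ + 2 := by exact_mod_cast this
    omega

lemma activePts_le_total {z : Fin k → I} {p q : Fin k → Fin (N + 1)} (hp : p ∈ activePts N z)
    (hq : q ∈ activePts N z) : p ≤ q ∨ q ≤ p := by
  by_contra! h
  obtain ⟨⟨i, hi⟩, ⟨j, hj⟩⟩ : (∃ i, q i < p i) ∧ ∃ j, p j < q j := by
    simpa only [Pi.le_def, not_forall, not_le] using h
  have h1 := sub_lt_one_of_kuhnHat_ne_zero (mem_filter.1 hp).2 i j
  have h2 := sub_lt_one_of_kuhnHat_ne_zero (mem_filter.1 hq).2 j i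
  have hi' : ((q i : ℕ) : ℝ) + 1 ≤ (p i : ℕ) := by exact_mod_cast hi
  have hj' : ((p j : ℕ) : ℝ) + 1 ≤ (q j : ℕ) := by exact_mod_cast hj
  linarith

/-- The active grid points form a chain between `floorPt N z` and `floorPt N z + 1`, so their
coordinate sums are distinct. -/
lemma card_activePts_le (N : ℕ) (z : Fin k → I) : (activePts N z).card ≤ k + 1 := by
  set m := ∑ i, ⌊N * (z i : ℝ)⌋₊
  have hmaps : Set.MapsTo (fun p : Fin k → Fin (N + 1) => ∑ i, (p i : ℕ)) (activePts N z)
      (Icc m (m + k)) := by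
    intro p hp
    have h := floor_le_and_le_floor_add_one_of_mem_activePts hp
    refine mem_Icc.2 ⟨sum_le_sum fun i _ => (h i).1, ?_⟩
    calc ∑ i, (p i : ℕ) ≤ ∑ i, (⌊N * (z i : ℝ)⌋₊ + 1) := sum_le_sum fun i _ => (h i).2
      _ = m + k := by simp [sum_add_distrib, m]
  have hinj : Set.InjOn (fun p : Fin k → Fin (N + 1) => ∑ i, (p i : ℕ)) (activePts N z) := by
    intro p hp q hq hpq
    rcases activePts_le_total hp hq with h | h
    · exact funext fun i => Fin.ext <|
        (sum_eq_sum_iff_of_le fun i _ => Fin.le_def.1 (h i)).1 hpq i (mem_univ i)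
    · exact (funext fun i => Fin.ext <|
        (sum_eq_sum_iff_of_le fun i _ => Fin.le_def.1 (h i)).1 hpq.symm i (mem_univ i)).symm
  have := card_le_card_of_injOn _ hmaps hinj
  rw [Nat.card_Icc] at this
  omega

variable {V : Type}

def gridHatSum (N : ℕ) (z : Fin k → I) : ℝ := ∑ p, gridHat N z p

lemma gridHatSum_pos (N : ℕ) (z : Fin k → I) : 0 < gridHatSum N z :=
  lt_of_lt_of_le
    (lt_of_le_of_ne (kuhnHat_nonneg _) (mem_filter.1 (floorPt_mem_activePts N z)).2.symm)
    (single_le_sum (f := gridHat N z) (fun _ _ => kuhnHat_nonneg _) (mem_univ _))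

/-- The simplicial map of the Kuhn subdivision of mesh `1 / N` sending the grid point `p` to the
vertex `w p` of the standard simplex. -/
def gridMap (N : ℕ) (w : (Fin k → Fin (N + 1)) → V) (z : Fin k → I) : V → ℝ :=
  ∑ p, (gridHat N z p / gridHatSum N z) • Pi.single (w p) 1

lemma continuous_gridMap (N : ℕ) (w : (Fin k → Fin (N + 1)) → V) : Continuous (gridMap N w) := by
  have hhat : ∀ p, Continuous fun z : Fin k → I => gridHat N z p := fun p =>
    continuous_kuhnHat.comp (by fun_prop)
  have hweight : ∀ p, Continuous fun z => gridHat N z p / gridHatSum N z := fun p =>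
    (hhat p).div (continuous_finsetSum _ fun q _ => hhat q) fun z => (gridHatSum_pos N z).ne'
  exact continuous_finsetSum _ fun p _ => (hweight p).smul continuous_const

lemma gridMap_mem_stdSimplex [Fintype V] (N : ℕ) (w : (Fin k → Fin (N + 1)) → V) (z : Fin k → I) :
    gridMap N w z ∈ stdSimplex ℝ V :=
  (convex_stdSimplex ℝ V).sum_mem (fun p _ => div_nonneg (kuhnHat_nonneg _) (gridHatSum_pos N z).le)
    (by rw [← sum_div]; exact div_self (gridHatSum_pos N z).ne')
    (fun p _ => single_mem_stdSimplex ℝ (w p))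

lemma supp_gridMap_subset [Fintype V] (N : ℕ) (w : (Fin k → Fin (N + 1)) → V) (z : Fin k → I) :
    ASC.supp (gridMap N w z) ⊆ (activePts N z).image w := by
  intro v hv
  rw [ASC.mem_supp, gridMap, Finset.sum_apply] at hv
  obtain ⟨p, -, hp⟩ := exists_ne_zero_of_sum_ne_zero hv
  rw [Pi.smul_apply, smul_eq_mul] at hp
  obtain ⟨hhat, hsingle⟩ := mul_ne_zero_iff.1 hp
  refine mem_image.2 ⟨p, mem_filter.2 ⟨mem_univ p, fun h => hhat (by simp [h])⟩, ?_⟩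
  by_contra hpv
  exact hsingle (Pi.single_eq_of_ne' hpv 1)

lemma gridMap_eq_single [Fintype V] {w : (Fin k → Fin (N + 1)) → V} {z : Fin k → I} {u : V}
    (h : ∀ p ∈ activePts N z, w p = u) : gridMap N w z = Pi.single u 1 :=
  ASC.eq_single_of_supp_subset (gridMap_mem_stdSimplex N w z) <|
    (supp_gridMap_subset N w z).trans fun v hv => by
      obtain ⟨p, hp, rfl⟩ := mem_image.1 hv
      exact mem_singleton.2 (h p hp)

lemma dist_gridPt_gridPt_le (hN : 0 < N) {z : Fin k → I} {p q : Fin k → Fin (N + 1)}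
    (hp : p ∈ activePts N z) (hq : q ∈ activePts N z) :
    dist (gridPt N p) (gridPt N q) ≤ 2 / N := by
  have := dist_gridPt_le hN hp
  have := dist_gridPt_le hN hq
  calc dist (gridPt N p) (gridPt N q) ≤ dist z (gridPt N p) + dist z (gridPt N q) :=
        dist_triangle_left _ _ _
    _ ≤ 2 / N := by rw [div_eq_mul_inv]; linarith

lemma dist_gridPt_le_two_div (hN : 0 < N) {z : Fin k → I} {p : Fin k → Fin (N + 1)}
    (hp : p ∈ activePts N z) : dist z (gridPt N p) ≤ 2 / N :=
  (dist_gridPt_le hN hp).trans <| by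
    rw [div_eq_mul_inv]; linarith [inv_nonneg.2 (N.cast_nonneg (α := ℝ))]

lemma card_supp_gridMap_le [Fintype V] (N : ℕ) (w : (Fin k → Fin (N + 1)) → V)
    (z : Fin k → I) : (ASC.supp (gridMap N w z)).card ≤ k + 1 :=
  (card_le_card (supp_gridMap_subset N w z)).trans (card_image_le.trans (card_activePts_le N z))

end Cube

namespace ASC

variable {V : Type} [Fintype V] {K : ASC V}

lemma exists_inv_card_le (x : K.space) : ∃ v, (Fintype.card V : ℝ)⁻¹ ≤ x.1 v := by
  have hne : (univ : Finset V).Nonempty := (supp_nonempty x.2.2).mono (subset_univ _)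
  have : Nonempty V := hne.to_type
  have hcard : (Fintype.card V : ℝ) ≠ 0 := by exact_mod_cast Fintype.card_ne_zero
  obtain ⟨v, -, hv⟩ := exists_le_of_sum_le hne (f := fun _ => (Fintype.card V : ℝ)⁻¹)
    (g := x.1) (by simp [x.2.2.2, hcard])
  exact ⟨v, hv⟩

lemma inv_card_pos (x : K.space) : 0 < (Fintype.card V : ℝ)⁻¹ := by
  obtain ⟨v, -⟩ := supp_nonempty x.2.2
  have : Nonempty V := ⟨v⟩
  positivity

def space.heavyVertex (x : K.space) : V := (exists_inv_card_le x).choose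

lemma space.inv_card_le_heavyVertex (x : K.space) :
    (Fintype.card V : ℝ)⁻¹ ≤ x.1 x.heavyVertex :=
  (exists_inv_card_le x).choose_spec

lemma space.heavyVertex_mem_supp {x y : K.space} (h : dist x.1 y.1 < (Fintype.card V : ℝ)⁻¹) :
    y.heavyVertex ∈ supp x.1 := by
  have hxy : |x.1 y.heavyVertex - y.1 y.heavyVertex| < (Fintype.card V : ℝ)⁻¹ := by
    rw [← Real.dist_eq]
    exact (dist_le_pi_dist x.1 y.1 _).trans_lt h
  have := y.inv_card_le_heavyVertex
  exact mem_supp.2 (by linarith [(abs_lt.1 hxy).1])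

lemma space.heavyVertex_eq {x : K.space} {u : V} (h : x.1 = Pi.single u 1) :
    x.heavyVertex = u := by
  simpa [h, supp_single] using
    heavyVertex_mem_supp (x := x) (y := x) (by simpa using inv_card_pos x)

lemma exists_fine_grid {k : ℕ} (f : C(Fin k → I, K.space)) {ε : ℝ} (hε : 0 < ε) :
    ∃ N : ℕ, 0 < N ∧ (N : ℝ)⁻¹ ≤ ε ∧
      ∀ z z', dist z z' ≤ 2 / N → dist (f z).1 (f z').1 < (Fintype.card V : ℝ)⁻¹ := by
  obtain ⟨δ, hδ, hδf⟩ := Metric.uniformContinuous_iff.1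
    (CompactSpace.uniformContinuous_of_continuous (continuous_subtype_val.comp f.continuous)) _
    (inv_card_pos (f 0))
  obtain ⟨N, hN⟩ := exists_nat_gt (max (2 / δ) ε⁻¹)
  have hNpos : (0 : ℝ) < N := lt_of_le_of_lt (le_max_of_le_left (by positivity)) hN
  refine ⟨N, by exact_mod_cast hNpos, inv_le_of_inv_le₀ hε ((le_max_right _ _).trans hN.le),
    fun z z' h => hδf (h.trans_lt ?_)⟩
  rw [div_lt_iff₀ hNpos, mul_comm, ← div_lt_iff₀ hδ]
  exact (le_max_left _ _).trans_lt hN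

variable {k N : ℕ}

def heavyLabel (f : C(Fin k → I, K.space)) (N : ℕ) (p : Fin k → Fin (N + 1)) : V :=
  (f (Cube.gridPt N p)).heavyVertex

lemma supp_gridMap_heavyLabel_subset {f : C(Fin k → I, K.space)}
    (hfine : ∀ z z', dist z z' ≤ 2 / N → dist (f z).1 (f z').1 < (Fintype.card V : ℝ)⁻¹)
    {z y : Fin k → I} (hy : ∀ p ∈ Cube.activePts N z, dist y (Cube.gridPt N p) ≤ 2 / N) :
    supp (Cube.gridMap N (heavyLabel f N) z) ⊆ supp (f y).1 :=
  (Cube.supp_gridMap_subset N _ z).trans <| image_subset_iff.2 fun p hp =>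
    space.heavyVertex_mem_supp (hfine _ _ (hy p hp))

def gridApprox (f : C(Fin k → I, K.space)) (hN : 0 < N)
    (hfine : ∀ z z', dist z z' ≤ 2 / N → dist (f z).1 (f z').1 < (Fintype.card V : ℝ)⁻¹) :
    C(Fin k → I, K.space) :=
  mkMap (Cube.gridMap N (heavyLabel f N)) (Cube.continuous_gridMap N _)
    (Cube.gridMap_mem_stdSimplex N _) fun z =>
      supp_mem_faces_of_subset (Cube.gridMap_mem_stdSimplex N _ z) (supp_mem_faces (f z))
        (supp_gridMap_heavyLabel_subset hfine fun _ hp => Cube.dist_gridPt_le_two_div hN hp)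

lemma supp_gridApprox_subset {f : C(Fin k → I, K.space)} (hN : 0 < N) {hfine} (z : Fin k → I) :
    supp (gridApprox f hN hfine z).1 ⊆ supp (f z).1 :=
  supp_gridMap_heavyLabel_subset hfine fun _ hp => Cube.dist_gridPt_le_two_div hN hp

theorem exists_approx_card_supp_le (f : C(Fin k → I, K.space)) {ε : ℝ} (hε : 0 < ε) :
    ∃ g : C(Fin k → I, K.space), ∀ z, supp (g z).1 ⊆ supp (f z).1 ∧
      (supp (g z).1).card ≤ k + 1 ∧
      ∀ y, (∀ z', dist z z' ≤ ε → f z' = y) → (g z).1 = Pi.single y.heavyVertex 1 := by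
  obtain ⟨N, hN, hNε, hfine⟩ := exists_fine_grid f hε
  refine ⟨gridApprox f hN hfine, fun z => ⟨supp_gridApprox_subset hN z,
    Cube.card_supp_gridMap_le N _ z, fun y hy => Cube.gridMap_eq_single fun p hp => ?_⟩⟩
  rw [heavyLabel, hy _ ((Cube.dist_gridPt_le hN hp).trans hNε)]

end ASC

end

namespace ASC

variable {V : Type} [Fintype V] {K : ASC V} {k : ℕ}

theorem exists_approx_pair (hK : K.IsClique) {σ : Finset V} (hσ : σ ∈ K.faces) {r : ℕ}
    (hext : ∀ τ ∈ K.faces, τ.card ≤ r → ∃ v ∈ σ, insert v τ ∈ K.faces)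
    (g : C(Fin k → unitInterval, K.space)) (hg : ∀ z, (supp (g z).1).card ≤ r) {u : V}
    (hu : {u} ∈ K.faces) {ε : ℝ} (hε : 0 < ε) :
    ∃ g' h : C(Fin k → unitInterval, K.space), ∃ v ∈ σ, insert v {u} ∈ K.faces ∧ ∀ z,
      supp (g' z).1 ⊆ supp (g z).1 ∧ supp (h z).1 ⊆ σ ∧
      supp (g' z).1 ∪ supp (h z).1 ∈ K.faces ∧
      ((∀ z', dist z z' ≤ ε → (g z').1 = Pi.single u 1) →
        (g' z).1 = Pi.single u 1 ∧ (h z).1 = Pi.single v 1) := by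
  have : Nonempty V := ⟨u⟩
  choose! extVertex hextσ hextface using hext
  have hstar : ∀ y, extVertex (supp (g y).1) ∈ σ ∧
      insert (extVertex (supp (g y).1)) (supp (g y).1) ∈ K.faces :=
    fun y => ⟨hextσ _ (supp_mem_faces (g y)) (hg y), hextface _ (supp_mem_faces (g y)) (hg y)⟩
  have hr : ({u} : Finset V).card ≤ r := (card_pos.2 (supp_nonempty (g 0).2.2)).trans_le (hg 0)
  obtain ⟨N, hN, hNε, hfine⟩ := exists_fine_grid g hε
  let starLabel (p : Fin k → Fin (N + 1)) : V := extVertex (supp (g (Cube.gridPt N p)).1)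
  have hsupp_h : ∀ z, supp (Cube.gridMap N starLabel z) ⊆ σ := fun z =>
    (Cube.supp_gridMap_subset N _ z).trans <| image_subset_iff.2 fun p _ => (hstar _).1
  let h : C(Fin k → unitInterval, K.space) :=
    mkMap (Cube.gridMap N starLabel) (Cube.continuous_gridMap N _)
      (Cube.gridMap_mem_stdSimplex N _) fun z =>
        supp_mem_faces_of_subset (Cube.gridMap_mem_stdSimplex N _ z) hσ (hsupp_h z)
  refine ⟨gridApprox g hN hfine, h, extVertex {u}, hextσ _ hu hr, hextface _ hu hr, fun z =>
    ⟨supp_gridApprox_subset hN z, hsupp_h z, ?_, fun hz => ?_⟩⟩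
  · obtain ⟨q, hq⟩ : (Cube.activePts N z).Nonempty := ⟨_, Cube.floorPt_mem_activePts N z⟩
    refine K.down_closed _ ((hK.image_union_image_mem_faces hσ ⟨q, hq⟩ (S := fun p =>
        supp (g (Cube.gridPt N p)).1) (fun p hp q hq => ?_) fun p _ => hstar _))
      _ (union_subset_union (Cube.supp_gridMap_subset N _ z) (Cube.supp_gridMap_subset N _ z))
      ((supp_nonempty (gridApprox g hN hfine z).2.2).mono subset_union_left)
    exact space.heavyVertex_mem_supp (hfine _ _ (Cube.dist_gridPt_gridPt_le hN hq hp))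
  · have hgp : ∀ p ∈ Cube.activePts N z, (g (Cube.gridPt N p)).1 = Pi.single u 1 :=
      fun p hp => hz _ ((Cube.dist_gridPt_le hN hp).trans hNε)
    exact ⟨Cube.gridMap_eq_single fun p hp => space.heavyVertex_eq (hgp p hp),
      Cube.gridMap_eq_single fun p hp => by simp only [starLabel, hgp p hp, supp_single]⟩

section CollarBlend

variable {X : Type*} [TopologicalSpace X] {c : ℝ}

def rampDown (c : ℝ) : C(ℝ, unitInterval) :=
  ⟨fun u => Set.projIcc 0 1 zero_le_one (1 - 2 * u / c), continuous_projIcc.comp (by fun_prop)⟩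

def rampUp (c : ℝ) : C(ℝ, unitInterval) :=
  ⟨fun u => Set.projIcc 0 1 zero_le_one (2 * u / c - 1), continuous_projIcc.comp (by fun_prop)⟩

lemma rampDown_zero : rampDown c 0 = 1 :=
  Set.projIcc_of_right_le zero_le_one (by simp)

lemma lt_of_rampDown_ne_zero (hc : 0 < c) {u : ℝ} (h : rampDown c u ≠ 0) : u < c / 2 := by
  by_contra! hu
  refine h (Set.projIcc_of_le_left zero_le_one ?_)
  rw [sub_nonpos, le_div_iff₀ hc]
  linarith

lemma rampUp_eq_zero (hc : 0 < c) {u : ℝ} (hu : u ≤ c / 2) : rampUp c u = 0 := by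
  refine Set.projIcc_of_le_left zero_le_one ?_
  rw [sub_nonpos, div_le_iff₀ hc]
  linarith

lemma rampUp_eq_one (hc : 0 < c) {u : ℝ} (hu : c ≤ u) : rampUp c u = 1 := by
  refine Set.projIcc_of_right_le zero_le_one ?_
  rw [le_sub_iff_add_le, le_div_iff₀ hc]
  linarith

/-- Interpolates from `x₀` where `d = 0` to `Y` where `d ≥ c / 2`. -/
def collarBlend (hc : 0 < c) (d : C(X, ℝ)) {x₀ a : K.space} (hax₀ : supp a.1 ⊆ supp x₀.1)
    (Y : C(X, K.space)) (hY : ∀ x, d x < c / 2 → Y x = a) : C(X, K.space) :=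
  mix ((rampDown c).comp d) Y (.const X x₀) fun x hx => by
    rw [hY x (lt_of_rampDown_ne_zero hc hx), ContinuousMap.const_apply, union_eq_right.2 hax₀]
    exact supp_mem_faces x₀

variable (hc : 0 < c) {d : C(X, ℝ)} {x₀ a : K.space} (hax₀ : supp a.1 ⊆ supp x₀.1)

lemma collarBlend_apply_of_eq_zero {Y : C(X, K.space)} {hY} {x : X} (hx : d x = 0) :
    collarBlend hc d hax₀ Y hY x = x₀ :=
  mix_apply_of_eq_one (by simp [hx, rampDown_zero])

lemma supp_collarBlend_subset {Y : C(X, K.space)} {hY} {f : C(X, K.space)}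
    (hf : ∀ x, d x < c / 2 → f x = x₀) (hYf : ∀ x, supp (Y x).1 ⊆ supp (f x).1) (x : X) :
    supp (collarBlend hc d hax₀ Y hY x).1 ⊆ supp (f x).1 := by
  by_cases hρ : (rampDown c).comp d x = 0
  · rw [collarBlend, mix_apply_of_eq_zero hρ]
    exact hYf x
  · refine (supp_mix_subset _ _ _ _ x).trans (union_subset (hYf x) ?_)
    rw [ContinuousMap.const_apply, hf x (lt_of_rampDown_ne_zero hc hρ)]

lemma homotopicRel_collarBlend_of_supp_subset {Y f : C(X, K.space)} {hY}
    (hf : ∀ x, d x < c / 2 → f x = x₀) (hYf : ∀ x, supp (Y x).1 ⊆ supp (f x).1) {S : Set X}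
    (hS : ∀ x ∈ S, d x = 0) : f.HomotopicRel (collarBlend hc d hax₀ Y hY) S :=
  homotopicRel_of_supp_union_mem_faces
    (fun x => by
      rw [union_eq_left.2 (supp_collarBlend_subset hc hax₀ hf hYf x)]
      exact supp_mem_faces _)
    fun x hx => by
      rw [collarBlend_apply_of_eq_zero hc hax₀ (hS x hx), hf x (by linarith [hS x hx])]

lemma homotopicRel_collarBlend {Y₁ Y₂ : C(X, K.space)} {hY₁ hY₂}
    (h : ∀ x, supp (Y₁ x).1 ∪ supp (Y₂ x).1 ∈ K.faces) {S : Set X} (hS : ∀ x ∈ S, d x = 0) :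
    (collarBlend hc d hax₀ Y₁ hY₁).HomotopicRel (collarBlend hc d hax₀ Y₂ hY₂) S := by
  refine homotopicRel_of_supp_union_mem_faces (fun x => ?_) fun x hx => by
    simp only [collarBlend_apply_of_eq_zero hc hax₀ (hS x hx)]
  by_cases hρ : (rampDown c).comp d x = 0
  · simpa only [collarBlend, mix_apply_of_eq_zero hρ] using h x
  · have hx := lt_of_rampDown_ne_zero hc hρ
    have : collarBlend hc d hax₀ Y₁ hY₁ x = collarBlend hc d hax₀ Y₂ hY₂ x :=
      Subtype.ext (by simp [collarBlend, hY₁ x hx, hY₂ x hx])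
    rw [this, union_self]
    exact supp_mem_faces _

end CollarBlend

/-- Blend `x₀ → g' → h` across the collar; what remains is the path `x₀ → a → b` run along
`depth`, which contracts. -/
theorem homotopicRel_const_of_collar {c : ℝ} (hc : 0 < c)
    {f g' h : C(Fin k → unitInterval, K.space)} {x₀ a b : K.space}
    (hf : ∀ z, Cube.depth z ≤ c → f z = x₀) (hg' : ∀ z, Cube.depth z ≤ c → g' z = a)
    (hh : ∀ z, Cube.depth z ≤ c → h z = b) (hg'f : ∀ z, supp (g' z).1 ⊆ supp (f z).1)
    (hg'h : ∀ z, supp (g' z).1 ∪ supp (h z).1 ∈ K.faces)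
    (hhb : ∀ z, supp (h z).1 ∪ supp b.1 ∈ K.faces) (hax₀ : supp a.1 ⊆ supp x₀.1)
    (hab : supp a.1 ∪ supp b.1 ∈ K.faces) :
    f.HomotopicRel (.const _ x₀) (Cube.boundary (Fin k)) := by
  let d : C(Fin k → unitInterval, ℝ) := ⟨Cube.depth, Cube.continuous_depth⟩
  have hd : ∀ z ∈ Cube.boundary (Fin k), d z = 0 := fun _ => Cube.depth_eq_zero_of_mem_boundary
  have hcollar : ∀ z, d z < c / 2 → d z ≤ c := fun z hz => by linarith
  let g'h := mix ((rampUp c).comp d) g' h fun z _ => hg'h z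
  let ab := mix (rampUp c) (.const ℝ a) (.const ℝ b) fun _ _ => hab
  have hab_collar : ∀ u, u < c / 2 → ab u = a := fun _ hu =>
    mix_apply_of_eq_zero (rampUp_eq_zero hc hu.le)
  let Φ := collarBlend hc (.id ℝ) hax₀ ab hab_collar
  have hg'_collar : ∀ z, d z < c / 2 → g' z = a := fun z hz => hg' z (hcollar z hz)
  have hg'h_collar : ∀ z, d z < c / 2 → g'h z = a := fun z hz =>
    (mix_apply_of_eq_zero (t := (rampUp c).comp d) (rampUp_eq_zero hc hz.le)).trans
      (hg'_collar z hz)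
  have hg'_g'h : ∀ z, supp (g' z).1 ∪ supp (g'h z).1 ∈ K.faces := fun z =>
    K.down_closed _ (hg'h z) _ (union_subset subset_union_left (supp_mix_subset _ _ _ _ z))
      ((supp_nonempty (g' z).2.2).mono subset_union_left)
  have hg'h_ab : ∀ z, supp (g'h z).1 ∪ supp (ab (d z)).1 ∈ K.faces := fun z => by
    by_cases hz : d z ≤ c
    · have : g'h z = ab (d z) :=
        Subtype.ext (by simp only [g'h, mix_apply_coe, hg' z hz, hh z hz]; rfl)
      rw [← this, union_self]
      exact supp_mem_faces _
    · have hα : rampUp c (d z) = 1 := rampUp_eq_one hc (le_of_not_ge hz)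
      rw [show g'h z = h z from mix_apply_of_eq_one (t := (rampUp c).comp d) hα,
        show ab (d z) = b from mix_apply_of_eq_one (t := rampUp c) hα]
      exact hhb z
  have hΦ : Φ 0 = x₀ := collarBlend_apply_of_eq_zero hc hax₀ rfl
  have hcontract := ContinuousMap.homotopicRel_comp_const Φ d hd
  rw [hΦ] at hcontract
  refine (homotopicRel_collarBlend_of_supp_subset hc hax₀ (hY := hg'_collar)
    (fun z hz => hf z (hcollar z hz)) hg'f hd).trans <|
    (homotopicRel_collarBlend hc hax₀ (hY₂ := hg'h_collar) hg'_g'h hd).trans <|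
    ContinuousMap.HomotopicRel.trans ?_ hcontract
  exact homotopicRel_collarBlend hc hax₀ (Y₂ := ab.comp d) (hY₂ := fun z => hab_collar (d z))
    hg'h_ab hd

theorem IsClique.genLoop_homotopic_const (hK : K.IsClique) {σ : Finset V} (hσ : σ ∈ K.faces)
    {r : ℕ} (hext : ∀ τ ∈ K.faces, τ.card ≤ r → ∃ v ∈ σ, insert v τ ∈ K.faces) {k : ℕ}
    (hk : k + 1 ≤ r) {x₀ : K.space} (γ : Ω^ (Fin k) K.space x₀) :
    GenLoop.Homotopic γ GenLoop.const := by
  obtain ⟨f, hγf, hf⟩ := GenLoop.exists_homotopicRel_eq_on_collar γ (c := 1 / 4) (by norm_num)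
    (by norm_num)
  obtain ⟨g, hg⟩ := exists_approx_card_supp_le f (ε := 1 / 8) (by norm_num)
  set u₀ := x₀.heavyVertex
  have hu₀ : u₀ ∈ supp x₀.1 := x₀.heavyVertex_mem_supp (by simpa using inv_card_pos x₀)
  have hu₀face := singleton_mem_faces (supp_mem_faces x₀) hu₀
  obtain ⟨g', h, v₀, hv₀σ, hu₀v₀, hgh⟩ := exists_approx_pair hK hσ hext g
    (fun z => (hg z).2.1.trans hk) hu₀face (ε := 1 / 16) (by norm_num)
  have hg_collar : ∀ z, Cube.depth z ≤ 1 / 8 → (g z).1 = Pi.single u₀ 1 := fun z hz =>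
    (hg z).2.2 x₀ fun z' hzz' => hf z' (by linarith [Cube.depth_le_add_of_dist_le hz hzz'])
  have hgh_collar : ∀ z, Cube.depth z ≤ 1 / 16 →
      (g' z).1 = Pi.single u₀ 1 ∧ (h z).1 = Pi.single v₀ 1 := fun z hz =>
    (hgh z).2.2.2 fun z' hzz' => hg_collar z' (by linarith [Cube.depth_le_add_of_dist_le hz hzz'])
  refine hγf.trans <| homotopicRel_const_of_collar (c := 1 / 16) (by norm_num)
    (a := vertex hu₀face) (b := vertex (singleton_mem_faces hσ hv₀σ))
    (fun z hz => hf z (by linarith)) (fun z hz => Subtype.ext (hgh_collar z hz).1)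
    (fun z hz => Subtype.ext (hgh_collar z hz).2) (fun z => (hgh z).1.trans (hg z).1)
    (fun z => (hgh z).2.2.1) (fun z => K.down_closed σ hσ _ ?_ ?_) (by simpa using hu₀)
    (by simpa [pair_comm] using hu₀v₀)
  · exact union_subset (hgh z).2.1 (by simpa using hv₀σ)
  · exact (supp_nonempty (h z).2.2).mono subset_union_left

theorem IsClique.nConnected (hK : K.IsClique) {σ : Finset V} (hσ : σ ∈ K.faces) {r : ℕ}
    (hext : ∀ τ ∈ K.faces, τ.card ≤ r → ∃ v ∈ σ, insert v τ ∈ K.faces) :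
    NConnected ((r : ℤ) - 1) K.space := by
  refine ⟨fun _ => ?_, fun k hk x => ⟨fun a b => ?_⟩⟩
  · obtain ⟨v, hv⟩ := K.nonempty_of_mem σ hσ
    exact ⟨vertex (singleton_mem_faces hσ hv)⟩
  · have hk' : k + 1 ≤ r := by omega
    refine Quotient.inductionOn₂ a b fun γ₁ γ₂ => Quotient.sound ?_
    exact (hK.genLoop_homotopic_const hσ hext hk' γ₁).trans
      (hK.genLoop_homotopic_const hσ hext hk' γ₂).symm

end ASC

theorem SimpleGraph.indepComplex_isClique {V : Type} (G : SimpleGraph V) :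
    G.indepComplex.IsClique := fun s hs hpair =>
  ⟨hs, fun v hv w hw => (hpair v hv w hw).2 v (mem_insert_self v _) w (by simp)⟩

end

/-- If `σ` is an independent set such that every independent set with at
most `r` vertices extends to some vertex of `σ`, then `I_G` is `(r-1)`-connected. -/
theorem statement16 {V : Type} [Fintype V] (G : SimpleGraph V) (r : ℕ)
    (σ : Finset V) (hσ : σ ∈ G.indepComplex.faces)
    (hext : ∀ τ ∈ G.indepComplex.faces, τ.card ≤ r →
      ∃ v ∈ σ, insert v τ ∈ G.indepComplex.faces) :
    NConnected ((r : ℤ) - 1) G.indepComplex.space :=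
  G.indepComplex_isClique.nConnected hσ hext
end
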